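/- Let ℛ be a linear growing TRS over 𝓕 and let 𝒟(ℛ) be the powerset-pair automaton built from 𝒞'_{NF_{ℛ•}}(ℛ). For every s ∈ 𝒯(𝓕): s ∈ L(𝒟(ℛ)) if and only if s is reducible with respect to ℛ and s[•]_p ∈ (→_ℛ*)[NF_{ℛ•}] for every redex position p of s. -/

import Mathlib

set_option maxHeartbeats 1000000

/-! ## Terms over a signature -/

/-- Terms over a signature given by a type `F` of function symbols together with
an arity function `ar`; variables are natural numbers. -/
inductive Term (F : Type) (ar : F → ℕ) : Type
  | var : ℕ → Term F ar
  | app : (f : F) → (Fin (ar f) → Term F ar) → Term F ar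

namespace Term

variable {F : Type} {ar : F → ℕ}

/-- The (finite) set of variables of a term. -/
def vars : Term F ar → Finset ℕ
  | var n => {n}
  | app _ ts => Finset.univ.biUnion fun i => (ts i).vars

/-- A term is ground if it contains no variables. -/
def Ground (t : Term F ar) : Prop := t.vars = ∅

/-- The number of occurrences of the variable `n` in a term. -/
def count (n : ℕ) : Term F ar → ℕ
  | var m => if m = n then 1 else 0
  | app _ ts => ∑ i, (ts i).count n

/-- A term is linear if no variable occurs twice in it. -/
def Linear (t : Term F ar) : Prop := ∀ n, t.count n ≤ 1

/-- Applying a substitution to a term. -/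
def subst (σ : ℕ → Term F ar) : Term F ar → Term F ar
  | var n => σ n
  | app f ts => app f fun i => (ts i).subst σ

/-- The subterm at a position (a list of argument indices), if the position is valid. -/
def subtermAt : Term F ar → List ℕ → Option (Term F ar)
  | t, [] => some t
  | var _, _ :: _ => none
  | app f ts, i :: p => if h : i < ar f then (ts ⟨i, h⟩).subtermAt p else none

/-- Replacing the subterm at a position, if the position is valid. -/
def replaceAt : Term F ar → List ℕ → Term F ar → Option (Term F ar)
  | _, [], u => some u
  | var _, _ :: _, _ => none
  | app f ts, i :: p, u =>
      if h : i < ar f then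
        ((ts ⟨i, h⟩).replaceAt p u).map fun s => app f (Function.update ts ⟨i, h⟩ s)
      else none

/-- `s.IsSubtermOf t` : `s` is a subterm of `t`. -/
def IsSubtermOf (s t : Term F ar) : Prop := ∃ p, t.subtermAt p = some s

/-- Relabelling of function symbols along an arity-preserving map of signatures. -/
def relabel {G : Type} {arG : G → ℕ} (φ : F → G) (h : ∀ f, arG (φ f) = ar f) :
    Term F ar → Term G arG
  | var n => var n
  | app f ts => app (φ f) fun i => (ts (Fin.cast (h f) i)).relabel φ h

end Term

/-! ## Rewriting -/

/-- One-step rewriting with a set of rewrite rules: there are a position `p` of `s`,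
a rule `(l, r)` and a substitution `σ` with `s|_p = lσ` and `t = s[rσ]_p`. -/
def Rewrites {F : Type} {ar : F → ℕ} (R : Set (Term F ar × Term F ar))
    (s t : Term F ar) : Prop :=
  ∃ (p : List ℕ) (l r : Term F ar) (σ : ℕ → Term F ar),
    (l, r) ∈ R ∧ s.subtermAt p = some (l.subst σ) ∧ s.replaceAt p (r.subst σ) = some t

/-- Many-step rewriting (reflexive–transitive closure). -/
abbrev RewritesStar {F : Type} {ar : F → ℕ} (R : Set (Term F ar × Term F ar)) :
    Term F ar → Term F ar → Prop :=
  Relation.ReflTransGen (Rewrites R)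

/-- A term rewriting system: a finite set of rules whose left-hand sides are not variables. -/
structure TRS (F : Type) (ar : F → ℕ) where
  rules : Set (Term F ar × Term F ar)
  finite : rules.Finite
  lhs_not_var : ∀ lr ∈ rules, ∀ n, lr.1 ≠ Term.var n

namespace TRS

variable {F : Type} {ar : F → ℕ}

def LeftLinear (R : TRS F ar) : Prop := ∀ lr ∈ R.rules, lr.1.Linear

def RightLinear (R : TRS F ar) : Prop := ∀ lr ∈ R.rules, lr.2.Linear

/-- A TRS is linear if all left- and right-hand sides are linear terms. -/
def IsLinear (R : TRS F ar) : Prop := R.LeftLinear ∧ R.RightLinear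

/-- A TRS is growing if every variable occurring both in the left- and the right-hand
side of a rule occurs at depth 1 in the left-hand side. -/
def Growing (R : TRS F ar) : Prop :=
  ∀ lr ∈ R.rules, ∀ n ∈ lr.1.vars, n ∈ lr.2.vars →
    ∀ (f : F) (ts : Fin (ar f) → Term F ar), lr.1 = Term.app f ts →
      ∀ i, n ∈ (ts i).vars → ts i = Term.var n

/-- A redex is an instance of a left-hand side. -/
def IsRedex (R : TRS F ar) (s : Term F ar) : Prop :=
  ∃ lr ∈ R.rules, ∃ σ : ℕ → Term F ar, s = lr.1.subst σ

/-- `p` is a redex position of `s`. -/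
def RedexPos (R : TRS F ar) (s : Term F ar) (p : List ℕ) : Prop :=
  ∃ u, s.subtermAt p = some u ∧ R.IsRedex u

def Reducible (R : TRS F ar) (s : Term F ar) : Prop := ∃ p, R.RedexPos s p

/-- A term is root-stable if it cannot be rewritten to a redex. -/
def RootStable (R : TRS F ar) (s : Term F ar) : Prop :=
  ¬ ∃ t, RewritesStar R.rules s t ∧ R.IsRedex t

/-- Ground normal forms. -/
def NFset (R : TRS F ar) : Set (Term F ar) := { t | t.Ground ∧ ¬ R.Reducible t }

/-- Ground redexes. -/
def RedexSet (R : TRS F ar) : Set (Term F ar) := { t | t.Ground ∧ R.IsRedex t }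

/-- Root-stable ground terms. -/
def RSset (R : TRS F ar) : Set (Term F ar) := { t | t.Ground ∧ R.RootStable t }

/-- Relabelling a TRS along an arity-preserving map of signatures. -/
def relabel {G : Type} {arG : G → ℕ} (R : TRS F ar) (φ : F → G)
    (h : ∀ f, arG (φ f) = ar f) : TRS G arG where
  rules := (fun lr => (lr.1.relabel φ h, lr.2.relabel φ h)) '' R.rules
  finite := R.finite.image _
  lhs_not_var := by
    rintro lr ⟨lr0, h0, rfl⟩ n hn
    dsimp only at hn
    cases h1 : lr0.1 with
    | var m => exact absurd h1 (R.lhs_not_var lr0 h0 m)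
    | app f ts =>
        rw [h1] at hn
        simp only [Term.relabel] at hn
        cases hn

end TRS

/-! ## Tree automata -/

/-- A transition rule `f(q₁,…,qₙ) → q` of a bottom-up tree automaton. -/
abbrev TARule (F : Type) (ar : F → ℕ) (Q : Type) : Type :=
  (f : F) × ((Fin (ar f) → Q) × Q)

/-- A (finite bottom-up) tree automaton without ε-transitions. -/
structure TreeAutomaton (F : Type) (ar : F → ℕ) (Q : Type) where
  trans : Set (TARule F ar Q)
  final : Set Q

/-- `Reaches Δ t q` : the ground term `t` rewrites to the state `q` using the
transition rules `Δ`. -/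
inductive Reaches {F : Type} {ar : F → ℕ} {Q : Type} (Δ : Set (TARule F ar Q)) :
    Term F ar → Q → Prop
  | app {f : F} {ts : Fin (ar f) → Term F ar} {qs : Fin (ar f) → Q} {q : Q} :
      (∀ i, Reaches Δ (ts i) (qs i)) → (⟨f, qs, q⟩ : TARule F ar Q) ∈ Δ →
      Reaches Δ (Term.app f ts) q

/-- `ReachesT Δ θ t q` : the term `t`, whose variables are interpreted as the states
given by `θ`, rewrites to the state `q` using the transition rules `Δ`. -/
inductive ReachesT {F : Type} {ar : F → ℕ} {Q : Type} (Δ : Set (TARule F ar Q))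
    (θ : ℕ → Q) : Term F ar → Q → Prop
  | var (n : ℕ) : ReachesT Δ θ (Term.var n) (θ n)
  | app {f : F} {ts : Fin (ar f) → Term F ar} {qs : Fin (ar f) → Q} {q : Q} :
      (∀ i, ReachesT Δ θ (ts i) (qs i)) → (⟨f, qs, q⟩ : TARule F ar Q) ∈ Δ →
      ReachesT Δ θ (Term.app f ts) q

/-- The language of a tree automaton: all ground terms reaching a final state. -/
def Lang {F : Type} {ar : F → ℕ} {Q : Type} (A : TreeAutomaton F ar Q) :
    Set (Term F ar) :=
  { t | t.Ground ∧ ∃ q ∈ A.final, Reaches A.trans t q }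

/-- A set of ground terms is recognizable if it is the language of some finite
tree automaton. -/
def Recognizable {F : Type} {ar : F → ℕ} (T : Set (Term F ar)) : Prop :=
  ∃ (Q : Type) (_ : Fintype Q) (A : TreeAutomaton F ar Q), T = Lang A

/-- The set of states occurring in a set of transition rules. -/
def statesOf {F : Type} {ar : F → ℕ} {Q : Type} (Γ : Set (TARule F ar Q)) : Set Q :=
  { q | ∃ ρ ∈ Γ, ρ.2.2 = q ∨ ∃ i, ρ.2.1 i = q }

/-! ## The automaton `ℬ(ℛ)` -/

/-- The canonical representative of the state `⟨t⟩` of `ℬ(ℛ)`: all variables are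
identified with the single state `⟨x⟩`, represented by `var 0`. -/
def stPattern {F : Type} {ar : F → ℕ} : Term F ar → Term F ar
  | Term.var _ => Term.var 0
  | Term.app f ts => Term.app f ts

/-- `S_ℛ`: the set of all subterms of arguments of left-hand sides of `ℛ`. -/
def SR {F : Type} {ar : F → ℕ} (R : TRS F ar) : Set (Term F ar) :=
  { s | ∃ lr ∈ R.rules, ∃ (f : F) (ts : Fin (ar f) → Term F ar),
        lr.1 = Term.app f ts ∧ ∃ i, s.IsSubtermOf (ts i) }

/-- The representatives of the states of `ℬ(ℛ)`: the patterns of terms of `S_ℛ`,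
together with `⟨x⟩`. -/
def BStateSet {F : Type} {ar : F → ℕ} (R : TRS F ar) : Set (Term F ar) :=
  stPattern '' SR R ∪ {Term.var 0}

/-- The matching rules of `ℬ(ℛ)` (with states encoded by `enc`):
`f(⟨t₁⟩,…,⟨tₙ⟩) → ⟨t⟩` for every `t = f(t₁,…,tₙ) ∈ S_ℛ`. -/
def BMatch {F : Type} {ar : F → ℕ} {Q : Type} (R : TRS F ar) (enc : Term F ar → Q) :
    Set (TARule F ar Q) :=
  { ρ | ∃ (f : F) (ts : Fin (ar f) → Term F ar), Term.app f ts ∈ SR R ∧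
        ρ = ⟨f, fun i => enc (stPattern (ts i)), enc (Term.app f ts)⟩ }

/-- The propagation rules `f(⟨x⟩,…,⟨x⟩) → ⟨x⟩` for every function symbol `f`. -/
def BProp {F : Type} {ar : F → ℕ} {Q : Type} (enc : Term F ar → Q) :
    Set (TARule F ar Q) :=
  { ρ | ∃ f : F, ρ = ⟨f, fun _ => enc (Term.var 0), enc (Term.var 0)⟩ }

/-- The transition rules of the automaton `ℬ(ℛ)`. -/
def BTrans {F : Type} {ar : F → ℕ} {Q : Type} (R : TRS F ar) (enc : Term F ar → Q) :
    Set (TARule F ar Q) :=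
  BMatch R enc ∪ BProp enc

/-- `Σ(t)`: the set of ground instances of the term `t`. -/
def GInst {F : Type} {ar : F → ℕ} (t : Term F ar) : Set (Term F ar) :=
  { s | s.Ground ∧ ∃ σ, s = t.subst σ }

/-! ## Saturation -/

/-- The state `qᵢ` associated to the argument `lᵢ` of a left-hand side in the
saturation rule: `lᵢθ` if `lᵢ` is a variable occurring in `r` (whose variable set
is `rv`), and `⟨lᵢ⟩` otherwise. -/
def satArg {F : Type} {ar : F → ℕ} {Q : Type} (enc : Term F ar → Q) (θ : ℕ → Q)
    (rv : Finset ℕ) : Term F ar → Q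
  | Term.var n => if n ∈ rv then θ n else enc (Term.var 0)
  | Term.app f ts => enc (Term.app f ts)

/-- One step of the saturation process: add all transition rules `f(q₁,…,qₙ) → q`
obtained from a rewrite rule `f(l₁,…,lₙ) → r` and a state substitution `θ`
(with values among the states `Qc` of the automaton) such that `rθ →_Γ* q`. -/
def satStep {F : Type} {ar : F → ℕ} {Q : Type} (R : TRS F ar) (enc : Term F ar → Q)
    (Qc : Set Q) (Γ : Set (TARule F ar Q)) : Set (TARule F ar Q) :=
  Γ ∪ { ρ | ∃ (f : F) (ls : Fin (ar f) → Term F ar) (r : Term F ar) (θ : ℕ → Q) (q : Q),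
        (Term.app f ls, r) ∈ R.rules ∧ (∀ n ∈ r.vars, θ n ∈ Qc) ∧ ReachesT Γ θ r q ∧
        ρ = ⟨f, fun i => satArg enc θ r.vars (ls i), q⟩ }

/-- The saturated set of transition rules: the closure of `Γ0` under the saturation
inference rule. -/
def satGamma {F : Type} {ar : F → ℕ} {Q : Type} (R : TRS F ar) (enc : Term F ar → Q)
    (Qc : Set Q) (Γ0 : Set (TARule F ar Q)) : Set (TARule F ar Q) :=
  ⋃ n, (satStep R enc Qc)^[n] Γ0

/-! ## The automaton `𝒞_T(ℛ)` and its extension `𝒞'_T(ℛ)` -/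

/-- The data of the construction of the automaton `𝒞_T(ℛ)`: an automaton `𝒜_T`
recognizing `T` with all states accessible and state set `QA`, together with an
encoding `enc` of the states `⟨t⟩` of `ℬ(ℛ)` into the common state type `Q`, such
that every state common to `𝒜_T` and `ℬ(ℛ)` accepts the same set of terms in both
automata. -/
structure CSetup {G : Type} [Fintype G] {arG : G → ℕ} (Q : Type) [Fintype Q]
    (Rg : TRS G arG) (T : Set (Term G arG)) where
  enc : Term G arG → Q
  A : TreeAutomaton G arG Q
  QA : Set Q
  henc : Set.InjOn enc (BStateSet Rg)
  hAstates : ∀ ρ ∈ A.trans, ρ.2.2 ∈ QA ∧ ∀ i, ρ.2.1 i ∈ QA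
  hfinal : A.final ⊆ QA
  hacc : ∀ q ∈ QA, ∃ s : Term G arG, s.Ground ∧ Reaches A.trans s q
  hground : ∃ s : Term G arG, s.Ground
  hshared : ∀ q ∈ QA ∩ enc '' BStateSet Rg, ∀ s : Term G arG,
      Reaches A.trans s q ↔ Reaches (BTrans Rg enc) s q
  hT : T = Lang A

namespace CSetup

variable {G : Type} [Fintype G] {arG : G → ℕ} {Q : Type} [Fintype Q]
  {Rg : TRS G arG} {T : Set (Term G arG)}

/-- The set of states of the automaton `𝒞_T(ℛ)`. -/
def Qstates (C : CSetup Q Rg T) : Set Q := C.QA ∪ C.enc '' BStateSet Rg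

/-- The transition rules of `𝒞_T(ℛ)` before saturation: the union of `𝒜_T` and `ℬ(ℛ)`. -/
def Γ0 (C : CSetup Q Rg T) : Set (TARule G arG Q) := C.A.trans ∪ BTrans Rg C.enc

/-- The transition rules of `𝒞_T(ℛ)` after saturation. -/
def Γsat (C : CSetup Q Rg T) : Set (TARule G arG Q) :=
  satGamma Rg C.enc C.Qstates C.Γ0

end CSetup

/-- The redex rules `f(⟪l₁⟫,…,⟪lₙ⟫) → q_r` for every left-hand side `f(l₁,…,lₙ)`. -/
def RedexRules {F : Type} {ar : F → ℕ} {Q : Type} (R : TRS F ar)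
    (enc2 : Term F ar → Q) (qr : Q) : Set (TARule F ar Q) :=
  { ρ | ∃ (f : F) (ls : Fin (ar f) → Term F ar) (r : Term F ar),
        (Term.app f ls, r) ∈ R.rules ∧
        ρ = ⟨f, fun i => enc2 (stPattern (ls i)), qr⟩ }

/-- The rules `f(⟨x⟩,…,q_r,…,⟨x⟩) → q_r`. -/
def QrProp {F : Type} {ar : F → ℕ} {Q : Type} (enc : Term F ar → Q) (qr : Q) :
    Set (TARule F ar Q) :=
  { ρ | ∃ (f : F) (j : Fin (ar f)),
        ρ = ⟨f, fun i => if i = j then qr else enc (Term.var 0), qr⟩ }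

/-- The data of the construction of the automaton `𝒞'_T(ℛ)`: `𝒞_T(ℛ)` extended with
a fresh copy `⟪t⟫` (encoded by `enc2`, with `⟪x⟫ = ⟨x⟩`) of the states of `ℬ(ℛ)` and
a fresh state `q_r`. -/
structure CpSetup {G : Type} [Fintype G] {arG : G → ℕ} (Q : Type) [Fintype Q]
    (Rg : TRS G arG) (T : Set (Term G arG)) extends CSetup Q Rg T where
  enc2 : Term G arG → Q
  qr : Q
  henc2 : Set.InjOn enc2 (BStateSet Rg)
  hx : enc2 (Term.var 0) = enc (Term.var 0)
  hfresh : (enc2 '' (BStateSet Rg \ {Term.var 0}) ∪ {qr}) ∩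
              (QA ∪ enc '' BStateSet Rg) = ∅
  hqr : qr ∉ enc2 '' (BStateSet Rg \ {Term.var 0})

namespace CpSetup

variable {G : Type} [Fintype G] {arG : G → ℕ} {Q : Type} [Fintype Q]
  {Rg : TRS G arG} {T : Set (Term G arG)}

/-- The transition rules `Γ'` of the automaton `𝒞'_T(ℛ)`. -/
def Γ' (C : CpSetup Q Rg T) : Set (TARule G arG Q) :=
  C.toCSetup.Γsat ∪ BMatch Rg C.enc2 ∪ RedexRules Rg C.enc2 C.qr ∪ QrProp C.enc C.qr

end CpSetup

/-! ## The signature `𝓖 = 𝓕 ∪ {•}` -/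

/-- The arity function of the extended signature `𝓕 ∪ {•}` (with `•` the fresh
constant `none`). -/
def arB {F : Type} (ar : F → ℕ) : Option F → ℕ
  | none => 0
  | some f => ar f

/-- The term `•`. -/
def bulletTm {F : Type} {ar : F → ℕ} : Term (Option F) (arB ar) :=
  Term.app none Fin.elim0

/-- The embedding of `𝒯(𝓕)`-terms into terms over `𝓕 ∪ {•}`. -/
def liftB {F : Type} {ar : F → ℕ} : Term F ar → Term (Option F) (arB ar) :=
  Term.relabel some (fun _ => rfl)

/-- A TRS over `𝓕` viewed as a TRS over `𝓕 ∪ {•}`. -/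
def TRS.liftB {F : Type} {ar : F → ℕ} (R : TRS F ar) : TRS (Option F) (arB ar) :=
  R.relabel some (fun _ => rfl)

/-- The TRS `ℛ• = ℛ ∪ {• → •}` over the signature `𝓕 ∪ {•}`. -/
def TRS.bullet {F : Type} {ar : F → ℕ} (R : TRS F ar) : TRS (Option F) (arB ar) where
  rules := R.liftB.rules ∪ {(bulletTm, bulletTm)}
  finite := R.liftB.finite.union (Set.finite_singleton _)
  lhs_not_var := by
    rintro lr (h | h) n hn
    · exact R.liftB.lhs_not_var lr h n hn
    · rw [Set.mem_singleton_iff] at h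
      rw [h] at hn
      cases hn

/-! ## The automaton `𝒟(ℛ)` -/

/-- For a symbol `g` and sets of states `Ss` for the arguments, the set
`g(S₁,…,Sₙ)↓` of states reachable from `g` applied to states chosen from the `Ssᵢ`. -/
def oneStep {G : Type} {arG : G → ℕ} {Q : Type} (Γ : Set (TARule G arG Q)) (g : G)
    (Ss : Fin (arG g) → Set Q) : Set Q :=
  { q | ∃ qs : Fin (arG g) → Q, (∀ i, qs i ∈ Ss i) ∧ (⟨g, qs, q⟩ : TARule G arG Q) ∈ Γ }

/-- `t↓` for a ground term `t`: the set of states reachable from `t`. -/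
def dn {G : Type} {arG : G → ℕ} {Q : Type} (Γ : Set (TARule G arG Q))
    (t : Term G arG) : Set Q :=
  { q | Reaches Γ t q }

/-- There is a rewrite rule with left-hand side `g(l₁,…,lₙ)` such that
`⟪lᵢ⟫ ∈ Ssᵢ` for all `i`. -/
def LhsMatch {G : Type} {arG : G → ℕ} {Q : Type} (Rg : TRS G arG)
    (enc2 : Term G arG → Q) (g : G) (Ss : Fin (arG g) → Set Q) : Prop :=
  ∃ (ls : Fin (arG g) → Term G arG) (r : Term G arG),
    (Term.app g ls, r) ∈ Rg.rules ∧ ∀ i, enc2 (stPattern (ls i)) ∈ Ss i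

/-- The transition rules of the automaton `𝒟(ℛ)` over `𝓕`, built from the transition
rules `Γ'` of `𝒞'_{NF}(ℛ)` over `𝓕 ∪ {•}`. -/
def DTrans {F : Type} {ar : F → ℕ} {Q : Type} (Rb : TRS (Option F) (arB ar))
    (Γ' : Set (TARule (Option F) (arB ar) Q))
    (enc enc2 : Term (Option F) (arB ar) → Q) :
    Set (TARule F ar (Set Q × Set Q)) :=
  { ρ | ∃ (f : F) (SP : Fin (ar f) → Set Q × Set Q) (P1 P2 : Set Q),
      P1 ⊆ (⋃ i : Fin (ar f), oneStep Γ' (some f)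
              (fun j => @ite _ (j = i) (instDecidableEqFin _ j i) (SP j).2 (SP j).1)) ∧
      (∀ (i : Fin (ar f)), ∀ q ∈ (SP i).2,
        (P1 ∩ oneStep Γ' (some f) (fun j => @ite _ (j = i) (instDecidableEqFin _ j i) {q} (SP j).1)).Nonempty) ∧
      ((LhsMatch Rb enc2 (some f) (fun i => (SP i).1) ∧ P2 = {enc (Term.var 0)}) ∨
       (¬ LhsMatch Rb enc2 (some f) (fun i => (SP i).1) ∧ P2 = (∅ : Set Q))) ∧
      ρ = ⟨f, SP, (oneStep Γ' (some f) (fun i => (SP i).1), P1 ∪ P2)⟩ }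

/-- The automaton `𝒟(ℛ)`: final states are the pairs `[S,P]` with `q_r ∈ S` and
`P ⊆ Q_f`. -/
def DAutomaton {F : Type} {ar : F → ℕ} {Q : Type} (Rb : TRS (Option F) (arB ar))
    (Γ' : Set (TARule (Option F) (arB ar) Q))
    (enc enc2 : Term (Option F) (arB ar) → Q) (qr : Q) (Qf : Set Q) :
    TreeAutomaton F ar (Set Q × Set Q) where
  trans := DTrans Rb Γ' enc enc2
  final := { SP | qr ∈ SP.1 ∧ SP.2 ⊆ Qf }

/-! ## Growing approximations -/

/-- `VarRepl t t'` : `t'` is obtained from `t` by replacing occurrences of variables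
by (possibly other) variables. -/
inductive VarRepl {F : Type} {ar : F → ℕ} : Term F ar → Term F ar → Prop
  | var (n m : ℕ) : VarRepl (Term.var n) (Term.var m)
  | app (f : F) (ts ts' : Fin (ar f) → Term F ar) :
      (∀ i, VarRepl (ts i) (ts' i)) → VarRepl (Term.app f ts) (Term.app f ts')

/-- `Rg` is a growing approximation of `R`: a right-linear growing TRS obtained from
`R` by replacing, in each right-hand side, occurrences of variables by variables not
occurring in the corresponding left-hand side. -/
def IsGrowingApprox {F : Type} {ar : F → ℕ} (R Rg : TRS F ar) : Prop :=
  Rg.RightLinear ∧ Rg.Growing ∧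
  (∀ lr ∈ Rg.rules, ∃ lr' ∈ R.rules, lr.1 = lr'.1 ∧ VarRepl lr'.2 lr.2 ∧
      ∀ n ∈ lr.2.vars, n ∉ lr.1.vars) ∧
  (∀ lr ∈ R.rules, ∃ lr' ∈ Rg.rules, lr.1 = lr'.1 ∧ VarRepl lr.2 lr'.2 ∧
      ∀ n ∈ lr'.2.vars, n ∉ lr'.1.vars)

/-! ## The signature `𝓖 = 𝓕 ∪ {f° : f ∈ 𝓕}` -/

/-- The arity function of the signature `𝓕 ∪ {f° : f ∈ 𝓕}` (`inl f` is `f`,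
`inr f` is `f°`). -/
def arC {F : Type} (ar : F → ℕ) : F ⊕ F → ℕ
  | Sum.inl f => ar f
  | Sum.inr f => ar f

/-- The embedding of `𝒯(𝓕)`-terms into terms over `𝓕 ∪ {f° : f ∈ 𝓕}`. -/
def liftC {F : Type} {ar : F → ℕ} : Term F ar → Term (F ⊕ F) (arC ar) :=
  Term.relabel Sum.inl (fun _ => rfl)

/-- `t°`: mark the root symbol of `t`. -/
def circTm {F : Type} {ar : F → ℕ} : Term F ar → Term (F ⊕ F) (arC ar)
  | Term.var n => Term.var n
  | Term.app f ts => Term.app (Sum.inr f) fun i => liftC (ts i)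

/-- A TRS over `𝓕` viewed as a TRS over `𝓕 ∪ {f° : f ∈ 𝓕}`. -/
def TRS.liftC {F : Type} {ar : F → ℕ} (R : TRS F ar) : TRS (F ⊕ F) (arC ar) :=
  R.relabel Sum.inl (fun _ => rfl)

/-- The TRS `𝒮° = 𝒮 ∪ {l° → r | l → r ∈ 𝒮}` over the signature `𝓕 ∪ {f° : f ∈ 𝓕}`. -/
def TRS.circ {F : Type} {ar : F → ℕ} (S : TRS F ar) : TRS (F ⊕ F) (arC ar) where
  rules := S.liftC.rules ∪ (fun lr => (circTm lr.1, _root_.liftC lr.2)) '' S.rules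
  finite := S.liftC.finite.union (S.finite.image _)
  lhs_not_var := by
    rintro lr (h | ⟨lr0, h0, rfl⟩) n hn
    · exact S.liftC.lhs_not_var lr h n hn
    · dsimp only at hn
      cases h1 : lr0.1 with
      | var m => exact absurd h1 (S.lhs_not_var lr0 h0 m)
      | app f ts =>
          rw [h1] at hn
          simp only [circTm] at hn
          cases hn

/-- The transitions added to `ℬ(𝒮°)` to obtain `𝒜_{REDEX_{𝒮°}}`:
`f(⟨l₁⟩,…,⟨lₙ⟩) → q_f` and `f°(⟨l₁⟩,…,⟨lₙ⟩) → q_f` for each left-hand side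
`f(l₁,…,lₙ)` of a rule of `𝒮`. -/
def CircRedexRules {F : Type} {ar : F → ℕ} {Q : Type} (S : TRS F ar)
    (enc : Term (F ⊕ F) (arC ar) → Q) (qf : Q) : Set (TARule (F ⊕ F) (arC ar) Q) :=
  { ρ | ∃ (f : F) (ls : Fin (ar f) → Term F ar) (r : Term F ar),
      (Term.app f ls, r) ∈ S.rules ∧
      (ρ = ⟨Sum.inl f, fun i => enc (stPattern (liftC (ls i))), qf⟩ ∨
       ρ = ⟨Sum.inr f, fun i => enc (stPattern (liftC (ls i))), qf⟩) }

/-! ## The automaton `𝒟'(ℛ,𝒮)` -/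

/-- The data of the construction of `𝒞'_{RS_{𝒮°}}(ℛ)`: the saturated automaton
`𝒞_{RS_{𝒮°}}(ℛ)`, a fresh copy `⟪t⟫` (encoded by `enc2`, with `⟪x⟫ = ⟨x⟩`) of the
states of `ℬ(ℛ)`, and an automaton `𝒞_{REDEX_𝒮}(𝒮)` (transitions `Etrans`, final
states `Qf'`) recognizing the non-`𝒮`-root-stable ground terms of `𝒯(𝓕)`. -/
structure CrsSetup {F : Type} [Fintype F] {ar : F → ℕ} (Q : Type) [Fintype Q]
    (R S : TRS F ar) extends CSetup Q R.liftC (TRS.RSset S.circ) where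
  enc2 : Term (F ⊕ F) (arC ar) → Q
  henc2 : Set.InjOn enc2 (BStateSet R.liftC)
  hx : enc2 (Term.var 0) = enc (Term.var 0)
  hfresh2 : (enc2 '' (BStateSet R.liftC \ {Term.var 0})) ∩
              (QA ∪ enc '' BStateSet R.liftC) = ∅
  Etrans : Set (TARule (F ⊕ F) (arC ar) Q)
  Qf' : Set Q
  hQf' : Qf' ⊆ statesOf Etrans
  hEfresh : statesOf Etrans ∩
      (QA ∪ enc '' BStateSet R.liftC ∪ enc2 '' (BStateSet R.liftC \ {Term.var 0})) = ∅
  hE : ∀ t : Term (F ⊕ F) (arC ar),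
      (t.Ground ∧ ∃ q ∈ Qf', Reaches Etrans t q) ↔
      (∃ s : Term F ar, t = liftC s ∧ s.Ground ∧ ¬ S.RootStable s)

namespace CrsSetup

variable {F : Type} [Fintype F] {ar : F → ℕ} {Q : Type} [Fintype Q] {R S : TRS F ar}

/-- The transition rules `Γ'` of the automaton `𝒞'_{RS_{𝒮°}}(ℛ)`. -/
def Γ' (C : CrsSetup Q R S) : Set (TARule (F ⊕ F) (arC ar) Q) :=
  C.toCSetup.Γsat ∪ BMatch R.liftC C.enc2 ∪ C.Etrans

end CrsSetup

/-- The transition rules of the automaton `𝒟'(ℛ,𝒮)` over `𝓕`, built from the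
transition rules `Γ'` of `𝒞'_{RS_{𝒮°}}(ℛ)`. -/
def DTransRS {F : Type} {ar : F → ℕ} {Q : Type} (Rg : TRS (F ⊕ F) (arC ar))
    (Γ' : Set (TARule (F ⊕ F) (arC ar) Q)) (enc2 : Term (F ⊕ F) (arC ar) → Q) :
    Set (TARule F ar (Set Q × Set Q)) :=
  { ρ | ∃ (f : F) (SP : Fin (ar f) → Set Q × Set Q) (P1 P2 : Set Q),
      P1 ⊆ (⋃ i : Fin (ar f), oneStep Γ' (Sum.inl f)
              (fun j => @ite _ (j = i) (instDecidableEqFin _ j i) (SP j).2 (SP j).1)) ∧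
      (∀ (i : Fin (ar f)), ∀ q ∈ (SP i).2,
        (P1 ∩ oneStep Γ' (Sum.inl f) (fun j => @ite _ (j = i) (instDecidableEqFin _ j i) {q} (SP j).1)).Nonempty) ∧
      ((LhsMatch Rg enc2 (Sum.inl f) (fun i => (SP i).1) ∧ P2.Nonempty ∧
          P2 ⊆ oneStep Γ' (Sum.inr f) (fun i => (SP i).1)) ∨
       (¬ LhsMatch Rg enc2 (Sum.inl f) (fun i => (SP i).1) ∧ P2 = (∅ : Set Q))) ∧
      ρ = ⟨f, SP, (oneStep Γ' (Sum.inl f) (fun i => (SP i).1), P1 ∪ P2)⟩ }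

/-- The automaton `𝒟'(ℛ,𝒮)`: final states are the pairs `[S,P]` with
`S ∩ Q_f' ≠ ∅` and `P ⊆ Q_f`. -/
def DAutomatonRS {F : Type} {ar : F → ℕ} {Q : Type} (Rg : TRS (F ⊕ F) (arC ar))
    (Γ' : Set (TARule (F ⊕ F) (arC ar) Q)) (enc2 : Term (F ⊕ F) (arC ar) → Q)
    (Qf' Qf : Set Q) : TreeAutomaton F ar (Set Q × Set Q) where
  trans := DTransRS Rg Γ' enc2
  final := { SP | (SP.1 ∩ Qf').Nonempty ∧ SP.2 ⊆ Qf }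

/-!
A run of `𝒟(ℛ)` on `s` computes `s↓` in its first component, and `q_r ∈ s↓` exactly when `s`
is reducible. Its second component collects, for redex positions `p` of `s`, states reached by
`s[x]_p` with the hole `x` read as `⟨x⟩`: a transition lifts such a state of a child to the
parent, and a root redex contributes `⟨x⟩` itself. Acceptance thus says that every `s[x]_p`
reaches a final state of `𝒜_{NF}` in `𝒞'`. As the saturation of a linear growing TRS is sound
and complete, this holds iff `s[•]_p →_ℛ* t` for a normal form `t`, the symbol `•` standing
for `x` because it occurs in no rule and in no normal form of `ℛ•`. Conversely, taking for the
second component all final states reached by the `s[x]_p` yields an accepting run.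
-/

namespace Term

variable {F : Type} {ar : F → ℕ}

@[simp] lemma mem_vars_var {n m : ℕ} : n ∈ (var m : Term F ar).vars ↔ n = m :=
  Finset.mem_singleton

@[simp] lemma mem_vars_app {n : ℕ} {f : F} {ts : Fin (ar f) → Term F ar} :
    n ∈ (app f ts).vars ↔ ∃ i, n ∈ (ts i).vars := by
  simp [vars]

lemma count_le_count_app {f : F} (ts : Fin (ar f) → Term F ar) (i : Fin (ar f)) (n : ℕ) :
    (ts i).count n ≤ (app f ts).count n :=
  Finset.single_le_sum (f := fun j => (ts j).count n) (fun _ _ => Nat.zero_le _)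
    (Finset.mem_univ i)

lemma one_le_count_of_mem_vars {t : Term F ar} {n : ℕ} (h : n ∈ t.vars) : 1 ≤ t.count n := by
  induction t with
  | var m => simp_all [count]
  | app f ts ih =>
      obtain ⟨i, hi⟩ := mem_vars_app.mp h
      exact (ih i hi).trans (count_le_count_app ts i n)

lemma Linear.arg {f : F} {ts : Fin (ar f) → Term F ar} (h : (app f ts).Linear)
    (i : Fin (ar f)) : (ts i).Linear :=
  fun n => (count_le_count_app ts i n).trans (h n)

lemma Linear.eq_of_mem_vars {f : F} {ts : Fin (ar f) → Term F ar} (h : (app f ts).Linear)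
    {n : ℕ} {i j : Fin (ar f)} (hi : n ∈ (ts i).vars) (hj : n ∈ (ts j).vars) : i = j := by
  by_contra hij
  have hpair : (ts i).count n + (ts j).count n ≤ (app f ts).count n := by
    rw [← Finset.sum_pair (f := fun k => (ts k).count n) hij]
    exact Finset.sum_le_sum_of_subset (Finset.subset_univ _)
  have := h n
  have := one_le_count_of_mem_vars hi
  have := one_le_count_of_mem_vars hj
  omega

lemma subst_congr {t : Term F ar} {σ σ' : ℕ → Term F ar} (h : ∀ n ∈ t.vars, σ n = σ' n) :
    t.subst σ = t.subst σ' := by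
  induction t with
  | var n => exact h n (mem_vars_var.mpr rfl)
  | app f ts ih =>
      simp only [subst]
      congr 1
      funext i
      exact ih i fun n hn => h n (mem_vars_app.mpr ⟨i, hn⟩)

lemma Linear.exists_subst {f : F} {ls : Fin (ar f) → Term F ar} (hl : (app f ls).Linear)
    {us : Fin (ar f) → Term F ar} (h : ∀ i, ∃ σ, us i = (ls i).subst σ) :
    ∃ σ, app f us = (app f ls).subst σ := by
  classical
  choose σs hσs using h
  refine ⟨fun m => if hm : ∃ i, m ∈ (ls i).vars then σs hm.choose m else var m, ?_⟩
  simp only [subst]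
  congr 1
  funext i
  rw [hσs i]
  refine subst_congr fun m hm => ?_
  have hex : ∃ j, m ∈ (ls j).vars := ⟨i, hm⟩
  rw [dif_pos hex, hl.eq_of_mem_vars hex.choose_spec hm]

lemma ground_app_iff {f : F} {ts : Fin (ar f) → Term F ar} :
    (app f ts).Ground ↔ ∀ i, (ts i).Ground := by
  simp only [Ground, Finset.eq_empty_iff_forall_notMem, mem_vars_app, not_exists]
  exact forall_comm

lemma not_ground_var (n : ℕ) : ¬ (var n : Term F ar).Ground := by
  simp [Ground, vars]

lemma Ground.subst {t : Term F ar} {σ : ℕ → Term F ar} (h : ∀ n ∈ t.vars, (σ n).Ground) :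
    (t.subst σ).Ground := by
  induction t with
  | var n => exact h n (mem_vars_var.mpr rfl)
  | app f ts ih =>
      exact ground_app_iff.mpr fun i => ih i fun n hn => h n (mem_vars_app.mpr ⟨i, hn⟩)

lemma subtermAt_nil (t : Term F ar) : t.subtermAt [] = some t := by
  cases t <;> rfl

lemma replaceAt_nil (t v : Term F ar) : t.replaceAt [] v = some v := by
  cases t <;> rfl

lemma subtermAt_app_cons {f : F} (ts : Fin (ar f) → Term F ar) (i : Fin (ar f)) (p : List ℕ) :
    (app f ts).subtermAt ((i : ℕ) :: p) = (ts i).subtermAt p := by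
  simp [subtermAt]

lemma replaceAt_app_cons {f : F} (ts : Fin (ar f) → Term F ar) (i : Fin (ar f)) (p : List ℕ)
    (v : Term F ar) :
    (app f ts).replaceAt ((i : ℕ) :: p) v =
      ((ts i).replaceAt p v).map fun s => app f (Function.update ts i s) := by
  simp [replaceAt]

lemma subtermAt_app_cons_of_le {f : F} (ts : Fin (ar f) → Term F ar) {i : ℕ} (hi : ar f ≤ i)
    (p : List ℕ) : (app f ts).subtermAt (i :: p) = none := by
  simp [subtermAt, hi]

lemma subtermAt_append (t : Term F ar) (p p' : List ℕ) :
    t.subtermAt (p ++ p') = (t.subtermAt p).bind fun v => v.subtermAt p' := by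
  induction p generalizing t with
  | nil => simp [subtermAt_nil]
  | cons i p ih =>
      cases t with
      | var n => rfl
      | app f ts =>
          simp only [List.cons_append, subtermAt]
          split
          · exact ih _
          · rfl

lemma Linear.subtermAt {t v : Term F ar} {p : List ℕ} (hl : t.Linear)
    (hp : t.subtermAt p = some v) : v.Linear := by
  induction p generalizing t with
  | nil => rw [subtermAt_nil, Option.some_inj] at hp; exact hp ▸ hl
  | cons i p ih =>
      cases t with
      | var n => simp [Term.subtermAt] at hp
      | app f ts =>
          by_cases hi : i < ar f
          · rw [show i = ((⟨i, hi⟩ : Fin (ar f)) : ℕ) from rfl, subtermAt_app_cons] at hp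
            exact ih (hl.arg _) hp
          · simp [subtermAt_app_cons_of_le ts (not_lt.mp hi)] at hp

lemma Ground.replaceAt {t v w : Term F ar} {p : List ℕ}
    (hg : t.Ground) (hv : v.Ground) (h : t.replaceAt p v = some w) : w.Ground := by
  induction p generalizing t w with
  | nil =>
      rw [replaceAt_nil, Option.some_inj] at h
      exact h ▸ hv
  | cons i p ih =>
      cases t with
      | var n => simp [Term.replaceAt] at h
      | app f ts =>
          by_cases hi : i < ar f
          · rw [show i = ((⟨i, hi⟩ : Fin (ar f)) : ℕ) from rfl, replaceAt_app_cons,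
              Option.map_eq_some_iff] at h
            obtain ⟨s, hs, rfl⟩ := h
            refine ground_app_iff.mpr fun j => ?_
            rcases eq_or_ne j ⟨i, hi⟩ with rfl | hne
            · simpa using ih (ground_app_iff.mp hg _) hs
            · simpa [Function.update_of_ne hne] using ground_app_iff.mp hg j
          · simp [Term.replaceAt, hi] at h

end Term

open Term

section Rewriting

variable {F : Type} {ar : F → ℕ} {R : Set (Term F ar × Term F ar)}

lemma rewrites_app_update {f : F} {ts : Fin (ar f) → Term F ar} {i : Fin (ar f)}
    {v : Term F ar} (h : Rewrites R (ts i) v) :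
    Rewrites R (app f ts) (app f (Function.update ts i v)) := by
  obtain ⟨p, l, r, σ, hlr, hsub, hrep⟩ := h
  refine ⟨(i : ℕ) :: p, l, r, σ, hlr, ?_, ?_⟩
  · rwa [subtermAt_app_cons]
  · rw [replaceAt_app_cons, hrep]
    rfl

lemma rewritesStar_app_update {f : F} {ts : Fin (ar f) → Term F ar} {i : Fin (ar f)}
    {v : Term F ar} (h : RewritesStar R (ts i) v) :
    RewritesStar R (app f ts) (app f (Function.update ts i v)) := by
  induction h with
  | refl => rw [Function.update_eq_self]
  | tail _ hstep ih =>
      refine ih.tail ?_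
      simpa using rewrites_app_update (ts := Function.update ts i _) (i := i)
        (by simpa using hstep)

lemma rewritesStar_app {f : F} {ts us : Fin (ar f) → Term F ar}
    (h : ∀ i, RewritesStar R (ts i) (us i)) : RewritesStar R (app f ts) (app f us) := by
  classical
  suffices ∀ s : Finset (Fin (ar f)), RewritesStar R (app f ts) (app f (s.piecewise us ts)) by
    simpa using this Finset.univ
  intro s
  induction s using Finset.induction_on with
  | empty => simp [Relation.ReflTransGen.refl]
  | insert i s hi ih =>
      rw [Finset.piecewise_insert]
      refine ih.trans (rewritesStar_app_update ?_)
      rw [Finset.piecewise_eq_of_notMem _ _ _ hi]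
      exact h i

end Rewriting

namespace Term

variable {F : Type} {ar : F → ℕ} {G : Type} {arG : G → ℕ}

lemma vars_relabel (φ : F → G) (h : ∀ f, arG (φ f) = ar f) (t : Term F ar) :
    (t.relabel φ h).vars = t.vars := by
  induction t with
  | var m => rfl
  | app f ts ih =>
      ext n
      simp only [relabel, mem_vars_app, ih]
      exact (finCongr (h f)).exists_congr_left.trans (by simp)

lemma count_relabel (φ : F → G) (h : ∀ f, arG (φ f) = ar f) (t : Term F ar) (n : ℕ) :
    (t.relabel φ h).count n = t.count n := by
  induction t with
  | var m => rfl
  | app f ts ih =>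
      simp only [relabel, count]
      exact Fintype.sum_equiv (finCongr (h f)) _ _ fun i => ih _

lemma subst_relabel (φ : F → G) (h : ∀ f, arG (φ f) = ar f) (t : Term F ar)
    (σ : ℕ → Term F ar) :
    (t.subst σ).relabel φ h = (t.relabel φ h).subst fun n => (σ n).relabel φ h := by
  induction t with
  | var n => rfl
  | app f ts ih =>
      simp only [subst, relabel]
      congr 1
      funext i
      exact ih _

end Term

section LiftB

variable {F : Type} {ar : F → ℕ}

lemma liftB_app (f : F) (ts : Fin (ar f) → Term F ar) :
    liftB (app f ts) = app (some f) fun i => liftB (ts i) := rfl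

lemma vars_liftB (t : Term F ar) : (liftB t).vars = t.vars := vars_relabel _ _ t

lemma Term.Ground.liftB {t : Term F ar} (h : t.Ground) : (_root_.liftB t).Ground :=
  (vars_liftB t).trans h

lemma Term.Linear.liftB {t : Term F ar} (h : t.Linear) : (_root_.liftB t).Linear :=
  fun n => (count_relabel _ _ t n).trans_le (h n)

lemma liftB_subst (t : Term F ar) (σ : ℕ → Term F ar) :
    liftB (t.subst σ) = (liftB t).subst fun n => liftB (σ n) :=
  subst_relabel _ _ t σ

lemma subtermAt_liftB (s : Term F ar) (p : List ℕ) :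
    (liftB s).subtermAt p = (s.subtermAt p).map liftB := by
  induction p generalizing s with
  | nil => simp [subtermAt_nil]
  | cons i p ih =>
      cases s with
      | var n => rfl
      | app f ts =>
          show (if h : i < ar f then (liftB (ts ⟨i, h⟩)).subtermAt p else none) =
            Option.map liftB (if h : i < ar f then (ts ⟨i, h⟩).subtermAt p else none)
          split_ifs
          · exact ih _
          · rfl

def unliftB : Term (Option F) (arB ar) → Term F ar
  | var n => var n
  | app none _ => var 0
  | app (some f) ts => app f fun i => unliftB (ts i)

lemma unliftB_liftB (t : Term F ar) : unliftB (liftB t) = t := by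
  induction t with
  | var n => rfl
  | app f ts ih =>
      simp only [liftB_app, unliftB]
      congr 1
      funext i
      exact ih i

lemma unliftB_subst_liftB (l : Term F ar) (σ : ℕ → Term (Option F) (arB ar)) :
    unliftB ((liftB l).subst σ) = l.subst fun n => unliftB (σ n) := by
  induction l with
  | var n => rfl
  | app f ls ih =>
      simp only [liftB_app, subst, unliftB]
      congr 1
      funext i
      exact ih i

end LiftB

namespace TRS

section RedexPos

variable {G : Type} {arG : G → ℕ} (S : TRS G arG)

lemma redexPos_nil_iff (u : Term G arG) : S.RedexPos u [] ↔ S.IsRedex u := by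
  simp [RedexPos, subtermAt_nil]

lemma redexPos_app_cons_iff {g : G} (ts : Fin (arG g) → Term G arG) (i : Fin (arG g))
    (p : List ℕ) : S.RedexPos (app g ts) ((i : ℕ) :: p) ↔ S.RedexPos (ts i) p := by
  simp only [RedexPos, subtermAt_app_cons]

lemma redexPos_cons_iff {g : G} (ts : Fin (arG g) → Term G arG) (i : ℕ) (p : List ℕ) :
    S.RedexPos (app g ts) (i :: p) ↔ ∃ h : i < arG g, S.RedexPos (ts ⟨i, h⟩) p := by
  by_cases hi : i < arG g
  · simp only [hi, exists_true_left]
    exact S.redexPos_app_cons_iff ts ⟨i, hi⟩ p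
  · simp [RedexPos, subtermAt_app_cons_of_le ts (not_lt.mp hi), hi]

lemma not_redexPos_var_cons (n i : ℕ) (p : List ℕ) : ¬ S.RedexPos (var n) (i :: p) := by
  simp [RedexPos, subtermAt]

end RedexPos

end TRS

section LiftBRules

variable {F : Type} {ar : F → ℕ} {R : TRS F ar}

lemma mem_liftB_rules {lr : Term (Option F) (arB ar) × Term (Option F) (arB ar)} :
    lr ∈ R.liftB.rules ↔ ∃ l r, (l, r) ∈ R.rules ∧ lr = (liftB l, liftB r) := by
  simp only [TRS.liftB, TRS.relabel, Set.mem_image, Prod.exists]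
  exact exists₂_congr fun l r => ⟨fun ⟨h, e⟩ => ⟨h, e.symm⟩, fun ⟨h, e⟩ => ⟨h, e.symm⟩⟩

lemma liftB_mem_liftB_rules {l r : Term F ar} (h : (l, r) ∈ R.rules) :
    (liftB l, liftB r) ∈ R.liftB.rules :=
  mem_liftB_rules.mpr ⟨l, r, h, rfl⟩

lemma isRedex_liftB_iff {u : Term F ar} : R.liftB.IsRedex (liftB u) ↔ R.IsRedex u := by
  constructor
  · rintro ⟨lr, hlr, σ, hu⟩
    obtain ⟨l, r, hmem, rfl⟩ := mem_liftB_rules.mp hlr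
    refine ⟨(l, r), hmem, fun n => unliftB (σ n), ?_⟩
    rw [← unliftB_subst_liftB, ← hu, unliftB_liftB]
  · rintro ⟨⟨l, r⟩, hmem, σ, rfl⟩
    exact ⟨_, liftB_mem_liftB_rules hmem, _, liftB_subst l σ⟩

lemma redexPos_liftB_iff {u : Term F ar} {p : List ℕ} :
    R.liftB.RedexPos (liftB u) p ↔ R.RedexPos u p := by
  simp only [TRS.RedexPos, subtermAt_liftB, Option.map_eq_some_iff]
  constructor
  · rintro ⟨_, ⟨v, hv, rfl⟩, hred⟩
    exact ⟨v, hv, isRedex_liftB_iff.mp hred⟩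
  · rintro ⟨v, hv, hred⟩
    exact ⟨_, ⟨v, hv, rfl⟩, isRedex_liftB_iff.mpr hred⟩

lemma reducible_liftB_iff {u : Term F ar} : R.liftB.Reducible (liftB u) ↔ R.Reducible u :=
  exists_congr fun _ => redexPos_liftB_iff

lemma TRS.LeftLinear.liftB (h : R.LeftLinear) : R.liftB.LeftLinear := by
  intro lr hlr
  obtain ⟨l, r, hmem, rfl⟩ := mem_liftB_rules.mp hlr
  exact (h _ hmem).liftB

lemma TRS.RightLinear.liftB (h : R.RightLinear) : R.liftB.RightLinear := by
  intro lr hlr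
  obtain ⟨l, r, hmem, rfl⟩ := mem_liftB_rules.mp hlr
  exact (h _ hmem).liftB

lemma TRS.Growing.liftB (h : R.Growing) : R.liftB.Growing := by
  intro lr hlr n hnl hnr f ts hl i hi
  obtain ⟨l, r, hmem, rfl⟩ := mem_liftB_rules.mp hlr
  rw [vars_liftB] at hnl hnr
  cases l with
  | var m => cases hl
  | app g ls =>
      rw [liftB_app, app.injEq] at hl
      obtain ⟨rfl, hts⟩ := hl
      cases eq_of_heq hts
      rw [vars_liftB] at hi
      show _root_.liftB (ls i) = var n
      rw [h _ hmem n hnl hnr g ls rfl i hi]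
      rfl

end LiftBRules

section Runs

variable {G : Type} {arG : G → ℕ} {Q : Type} {Δ Δ' : Set (TARule G arG Q)}

lemma TARule.mk_inj {f : G} {qs qs' : Fin (arG f) → Q} {q q' : Q}
    (h : (⟨f, qs, q⟩ : TARule G arG Q) = ⟨f, qs', q'⟩) : qs = qs' ∧ q = q' :=
  Prod.mk.inj (eq_of_heq (Sigma.mk.inj h).2)

lemma Reaches.mono (h : Δ ⊆ Δ') {t : Term G arG} {q : Q} (hr : Reaches Δ t q) :
    Reaches Δ' t q := by
  induction hr with
  | app _ hrule ih => exact Reaches.app ih (h hrule)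

lemma ReachesT.mono (h : Δ ⊆ Δ') {θ : ℕ → Q} {t : Term G arG} {q : Q}
    (hr : ReachesT Δ θ t q) : ReachesT Δ' θ t q := by
  induction hr with
  | var n => exact ReachesT.var n
  | app _ hrule ih => exact ReachesT.app ih (h hrule)

lemma Reaches.reachesT (θ : ℕ → Q) {t : Term G arG} {q : Q} (hr : Reaches Δ t q) :
    ReachesT Δ θ t q := by
  induction hr with
  | app _ hrule ih => exact ReachesT.app ih hrule

lemma ReachesT.reaches {θ : ℕ → Q} {t : Term G arG} {q : Q} (hr : ReachesT Δ θ t q)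
    (hg : t.Ground) : Reaches Δ t q := by
  induction hr with
  | var n => exact absurd hg (not_ground_var n)
  | app _ hrule ih => exact Reaches.app (fun i => ih i (ground_app_iff.mp hg i)) hrule

lemma reachesT_var_iff {θ : ℕ → Q} {n : ℕ} {q : Q} :
    ReachesT Δ θ (var n) q ↔ q = θ n :=
  ⟨fun h => by cases h; rfl, fun h => h ▸ ReachesT.var n⟩

lemma reachesT_app_iff {θ : ℕ → Q} {g : G} {ts : Fin (arG g) → Term G arG} {q : Q} :
    ReachesT Δ θ (app g ts) q ↔
      ∃ qs, (∀ i, ReachesT Δ θ (ts i) (qs i)) ∧ (⟨g, qs, q⟩ : TARule G arG Q) ∈ Δ :=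
  ⟨fun h => by cases h with | app hts hrule => exact ⟨_, hts, hrule⟩,
    fun ⟨_, hts, hrule⟩ => ReachesT.app hts hrule⟩

lemma ReachesT.congr {θ θ' : ℕ → Q} {t : Term G arG} {q : Q} (hr : ReachesT Δ θ t q)
    (h : ∀ n ∈ t.vars, θ n = θ' n) : ReachesT Δ θ' t q := by
  induction hr with
  | var n => exact h n (mem_vars_var.mpr rfl) ▸ ReachesT.var n
  | app _ hrule ih =>
      exact ReachesT.app (fun i => ih i fun n hn => h n (mem_vars_app.mpr ⟨i, hn⟩)) hrule

lemma ReachesT.reaches_subst {θ : ℕ → Q} {t : Term G arG} {q : Q} {σ : ℕ → Term G arG}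
    (hr : ReachesT Δ θ t q) (h : ∀ n ∈ t.vars, Reaches Δ (σ n) (θ n)) :
    Reaches Δ (t.subst σ) q := by
  induction hr with
  | var n => exact h n (mem_vars_var.mpr rfl)
  | app _ hrule ih =>
      exact Reaches.app (fun i => ih i fun n hn => h n (mem_vars_app.mpr ⟨i, hn⟩)) hrule

lemma ReachesT.exists_of_subst {θ' : ℕ → Q} {σ : ℕ → Term G arG} {t : Term G arG}
    (hl : t.Linear) {q : Q} (h : ReachesT Δ θ' (t.subst σ) q) :
    ∃ θ : ℕ → Q, ReachesT Δ θ t q ∧ ∀ n ∈ t.vars, ReachesT Δ θ' (σ n) (θ n) := by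
  classical
  induction t generalizing q with
  | var n =>
      refine ⟨fun _ => q, ReachesT.var n, fun m hm => ?_⟩
      rwa [mem_vars_var.mp hm]
  | app f ts ih =>
      obtain ⟨qs, hts, hrule⟩ := reachesT_app_iff.mp h
      choose θs hθs hσ using fun i => ih i (hl.arg i) (hts i)
      refine ⟨fun n => if h : ∃ j, n ∈ (ts j).vars then θs h.choose n else θ' n,
        ReachesT.app (fun i => (hθs i).congr fun n hn => ?_) hrule, fun n hn => ?_⟩
      · have hex : ∃ j, n ∈ (ts j).vars := ⟨i, hn⟩
        rw [dif_pos hex, hl.eq_of_mem_vars hex.choose_spec hn]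
      · obtain ⟨i, hi⟩ := mem_vars_app.mp hn
        have hex : ∃ j, n ∈ (ts j).vars := ⟨i, hi⟩
        simp only [dif_pos hex, hl.eq_of_mem_vars hex.choose_spec hi]
        exact hσ i n hi

lemma ReachesT.mem_of_forall_mem {S : Set Q}
    (hΔ : ∀ ρ ∈ Δ, ρ.2.2 ∈ S) {θ : ℕ → Q} {t : Term G arG} {q : Q} (hr : ReachesT Δ θ t q)
    (hθ : ∀ n ∈ t.vars, θ n ∈ S) : q ∈ S := by
  cases hr with
  | var n => exact hθ n (mem_vars_var.mpr rfl)
  | app _ hrule => exact hΔ _ hrule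

lemma dn_app (g : G) (ts : Fin (arG g) → Term G arG) :
    dn Δ (app g ts) = oneStep Δ g fun i => dn Δ (ts i) := by
  ext q
  constructor
  · rintro (⟨hts, hrule⟩)
    exact ⟨_, hts, hrule⟩
  · rintro ⟨qs, hqs, hrule⟩
    exact Reaches.app hqs hrule

lemma ReachesT.of_replaceAt {θ : ℕ → Q} {t t' v v' : Term G arG} {p : List ℕ}
    (hsub : t.subtermAt p = some v) (hrep : t.replaceAt p v' = some t')
    (hvv' : ∀ q, ReachesT Δ θ v' q → ReachesT Δ θ v q) {q : Q}
    (h : ReachesT Δ θ t' q) : ReachesT Δ θ t q := by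
  induction p generalizing t t' q with
  | nil =>
      rw [subtermAt_nil, Option.some_inj] at hsub
      rw [replaceAt_nil, Option.some_inj] at hrep
      subst hsub hrep
      exact hvv' q h
  | cons i p ih =>
      cases t with
      | var n => simp [subtermAt] at hsub
      | app g ts =>
          by_cases hi : i < arG g
          · rw [show i = ((⟨i, hi⟩ : Fin (arG g)) : ℕ) from rfl] at hsub hrep
            rw [subtermAt_app_cons] at hsub
            rw [replaceAt_app_cons, Option.map_eq_some_iff] at hrep
            obtain ⟨s, hs, rfl⟩ := hrep
            obtain ⟨qs, hts, hrule⟩ := reachesT_app_iff.mp h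
            refine ReachesT.app (fun j => ?_) hrule
            rcases eq_or_ne j ⟨i, hi⟩ with rfl | hne
            · exact ih hsub hs (by simpa using hts ⟨i, hi⟩)
            · simpa [Function.update_of_ne hne] using hts j
          · simp [subtermAt_app_cons_of_le ts (not_lt.mp hi)] at hsub

lemma ReachesT.exists_of_iUnion {Γ : ℕ → Set (TARule G arG Q)} (hΓ : Monotone Γ)
    {θ : ℕ → Q} {t : Term G arG} {q : Q} (h : ReachesT (⋃ n, Γ n) θ t q) :
    ∃ n, ReachesT (Γ n) θ t q := by
  induction h with
  | var n => exact ⟨0, ReachesT.var n⟩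
  | @app g ts qs q _ hrule ih =>
      choose ns hns using ih
      obtain ⟨n₀, hn₀⟩ := Set.mem_iUnion.mp hrule
      exact ⟨n₀ ⊔ Finset.univ.sup ns, ReachesT.app
        (fun i => (hns i).mono (hΓ ((Finset.le_sup (Finset.mem_univ i)).trans le_sup_right)))
        (hΓ le_sup_left hn₀)⟩

end Runs

section Patterns

variable {G : Type} {arG : G → ℕ} {Q : Type} {Rg : TRS G arG}

lemma SR_arg_mem {f : G} {ts : Fin (arG f) → Term G arG} (h : app f ts ∈ SR Rg)
    (i : Fin (arG f)) : ts i ∈ SR Rg := by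
  obtain ⟨lr, hlr, g, ls, hl, j, p, hp⟩ := h
  refine ⟨lr, hlr, g, ls, hl, j, p ++ [(i : ℕ)], ?_⟩
  rw [subtermAt_append, hp]
  exact (subtermAt_app_cons ts i []).trans (subtermAt_nil _)

lemma lhs_arg_mem_SR {f : G} {ls : Fin (arG f) → Term G arG} {r : Term G arG}
    (h : (app f ls, r) ∈ Rg.rules) (i : Fin (arG f)) : ls i ∈ SR Rg :=
  ⟨_, h, f, ls, rfl, i, [], subtermAt_nil _⟩

lemma linear_of_mem_SR (hll : Rg.LeftLinear) {w : Term G arG} (h : w ∈ SR Rg) :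
    w.Linear := by
  obtain ⟨lr, hlr, g, ls, hl, j, p, hp⟩ := h
  have hlin := hll lr hlr
  rw [hl] at hlin
  exact (hlin.arg j).subtermAt hp

lemma stPattern_mem_BStateSet {w : Term G arG} (h : w ∈ SR Rg) : stPattern w ∈ BStateSet Rg :=
  Or.inl ⟨w, h, rfl⟩

lemma var_zero_mem_BStateSet : (var 0 : Term G arG) ∈ BStateSet Rg :=
  Or.inr rfl

variable {enc : Term G arG → Q} {Δ : Set (TARule G arG Q)}

lemma reachesT_enc_var_zero (hB : BProp enc ⊆ Δ) (t : Term G arG) :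
    ReachesT Δ (fun _ => enc (var 0)) t (enc (var 0)) := by
  induction t with
  | var n => exact ReachesT.var n
  | app f ts ih => exact ReachesT.app ih (hB ⟨f, rfl⟩)

lemma reaches_enc_var_zero (hB : BProp enc ⊆ Δ) {t : Term G arG} (hg : t.Ground) :
    Reaches Δ t (enc (var 0)) :=
  (reachesT_enc_var_zero hB t).reaches hg

/-- `e` may be the second copy `⟪t⟫` of the states of `ℬ(ℛ)`, sharing `⟨x⟩` with `enc`. -/
lemma reachesT_subst_stPattern {e : Term G arG → Q} (hBM : BMatch Rg e ⊆ Δ)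
    (hBP : BProp enc ⊆ Δ) (hx : e (var 0) = enc (var 0)) {w : Term G arG} (hw : w ∈ SR Rg)
    (τ : ℕ → Term G arG) :
    ReachesT Δ (fun _ => enc (var 0)) (w.subst τ) (e (stPattern w)) := by
  induction w with
  | var n =>
      rw [stPattern, hx]
      exact reachesT_enc_var_zero hBP _
  | app f ts ih =>
      exact ReachesT.app (fun i => ih i (SR_arg_mem hw i)) (hBM ⟨f, ts, hw, rfl⟩)

lemma exists_subst_of_reaches_stPattern (hll : Rg.LeftLinear) {e : Term G arG → Q}
    (he : Set.InjOn e (BStateSet Rg))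
    (hΔ : ∀ ρ ∈ Δ, ρ.2.2 ∈ e '' (BStateSet Rg \ {var 0}) → ρ ∈ BMatch Rg e)
    {w : Term G arG} (hw : w ∈ SR Rg) {t : Term G arG} (h : Reaches Δ t (e (stPattern w))) :
    ∃ σ, t = w.subst σ := by
  induction w generalizing t with
  | var n => exact ⟨fun _ => t, rfl⟩
  | app f ws ih =>
      have hwB : app f ws ∈ BStateSet Rg := stPattern_mem_BStateSet hw
      cases h with
      | @app g ts qs _ hts hrule =>
          have hne : app f ws ∉ ({var 0} : Set (Term G arG)) := by simp
          obtain ⟨f₁, ws₁, hw₁, heq⟩ := hΔ _ hrule ⟨_, ⟨hwB, hne⟩, rfl⟩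
          obtain rfl : g = f₁ := congrArg Sigma.fst heq
          obtain ⟨rfl, htgt⟩ := TARule.mk_inj heq
          obtain ⟨rfl, hws⟩ := app.inj (he hwB (stPattern_mem_BStateSet hw₁) htgt)
          cases eq_of_heq hws
          exact (linear_of_mem_SR hll hw).exists_subst fun i => ih i (SR_arg_mem hw i) (hts i)

lemma states_mem_of_mem_BTrans {ρ : TARule G arG Q} (h : ρ ∈ BTrans Rg enc) :
    ρ.2.2 ∈ enc '' BStateSet Rg ∧ ∀ i, ρ.2.1 i ∈ enc '' BStateSet Rg := by
  rcases h with ⟨f, ts, hSR, rfl⟩ | ⟨f, rfl⟩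
  · exact ⟨⟨_, stPattern_mem_BStateSet hSR, rfl⟩,
      fun i => ⟨_, stPattern_mem_BStateSet (SR_arg_mem hSR i), rfl⟩⟩
  · exact ⟨⟨_, var_zero_mem_BStateSet, rfl⟩, fun _ => ⟨_, var_zero_mem_BStateSet, rfl⟩⟩

lemma mem_BMatch_of_mem_BTrans (he : Set.InjOn enc (BStateSet Rg)) {ρ : TARule G arG Q}
    (h : ρ ∈ BTrans Rg enc) (hρ : ρ.2.2 ∈ enc '' (BStateSet Rg \ {var 0})) :
    ρ ∈ BMatch Rg enc := by
  rcases h with h | ⟨f, rfl⟩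
  · exact h
  · obtain ⟨w, ⟨hw, hw0⟩, heq⟩ := hρ
    exact absurd (he hw var_zero_mem_BStateSet heq) hw0

end Patterns

section Saturation

variable {G : Type} {arG : G → ℕ} {Q : Type} {Rg : TRS G arG} {enc : Term G arG → Q}
  {Qc : Set Q} {Γ0 : Set (TARule G arG Q)}

lemma subset_satStep (Γ : Set (TARule G arG Q)) : Γ ⊆ satStep Rg enc Qc Γ :=
  Set.subset_union_left

lemma monotone_iterate_satStep : Monotone fun n => (satStep Rg enc Qc)^[n] Γ0 :=
  monotone_nat_of_le_succ fun n => by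
    rw [Function.iterate_succ_apply']
    exact subset_satStep _

lemma iterate_satStep_subset_satGamma (n : ℕ) :
    (satStep Rg enc Qc)^[n] Γ0 ⊆ satGamma Rg enc Qc Γ0 :=
  Set.subset_iUnion (fun n => (satStep Rg enc Qc)^[n] Γ0) n

lemma mem_satGamma_of_reachesT {f : G} {ls : Fin (arG f) → Term G arG} {r : Term G arG}
    {θ : ℕ → Q} {q : Q} (hrule : (app f ls, r) ∈ Rg.rules) (hθ : ∀ n ∈ r.vars, θ n ∈ Qc)
    (h : ReachesT (satGamma Rg enc Qc Γ0) θ r q) :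
    (⟨f, fun i => satArg enc θ r.vars (ls i), q⟩ : TARule G arG Q) ∈ satGamma Rg enc Qc Γ0 := by
  obtain ⟨n, hn⟩ := h.exists_of_iUnion monotone_iterate_satStep
  refine iterate_satStep_subset_satGamma (n + 1) ?_
  rw [Function.iterate_succ_apply']
  exact Or.inr ⟨f, ls, r, θ, q, hrule, hθ, hn, rfl⟩

end Saturation

namespace CSetup

variable {G : Type} [Fintype G] {arG : G → ℕ} {Q : Type} [Fintype Q]
  {Rg : TRS G arG} {T : Set (Term G arG)} (C : CSetup Q Rg T)

lemma A_subset_Γ0 : C.A.trans ⊆ C.Γ0 := Set.subset_union_left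

lemma BTrans_subset_Γ0 : BTrans Rg C.enc ⊆ C.Γ0 := Set.subset_union_right

lemma Γ0_subset_Γsat : C.Γ0 ⊆ C.Γsat := iterate_satStep_subset_satGamma 0

lemma BProp_subset_Γ0 : BProp C.enc ⊆ C.Γ0 :=
  Set.subset_union_right.trans C.BTrans_subset_Γ0

lemma BMatch_subset_Γ0 : BMatch Rg C.enc ⊆ C.Γ0 :=
  Set.subset_union_left.trans C.BTrans_subset_Γ0

lemma enc_var_zero_mem_Qstates : C.enc (var 0) ∈ C.Qstates :=
  Or.inr ⟨_, var_zero_mem_BStateSet, rfl⟩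

lemma states_mem_Qstates_of_mem_Γsat {ρ : TARule G arG Q} (h : ρ ∈ C.Γsat) :
    ρ.2.2 ∈ C.Qstates ∧ ∀ i, ρ.2.1 i ∈ C.Qstates := by
  obtain ⟨_, ⟨n, rfl⟩, h⟩ := h
  induction n generalizing ρ with
  | zero =>
      rcases (h : ρ ∈ C.Γ0) with hA | hB
      · exact ⟨Or.inl (C.hAstates ρ hA).1, fun i => Or.inl ((C.hAstates ρ hA).2 i)⟩
      · exact ⟨Or.inr (states_mem_of_mem_BTrans hB).1,
          fun i => Or.inr ((states_mem_of_mem_BTrans hB).2 i)⟩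
  | succ n ih =>
      simp only [Function.iterate_succ_apply'] at h ih
      rcases h with hold | ⟨f, ls, r, θ, q, hrule, hθ, hr, rfl⟩
      · exact ih hold
      refine ⟨hr.mem_of_forall_mem (fun ρ hρ => (ih hρ).1) hθ, fun i => ?_⟩
      show satArg C.enc θ r.vars (ls i) ∈ C.Qstates
      cases hls : ls i with
      | var m =>
          by_cases hm : m ∈ r.vars
          · simpa [satArg, hm] using hθ m hm
          · simpa [satArg, hm] using C.enc_var_zero_mem_Qstates
      | app g ss =>
          exact Or.inr ⟨_, stPattern_mem_BStateSet (hls ▸ lhs_arg_mem_SR hrule i), rfl⟩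

lemma exists_ground_reaches {q : Q} (hq : q ∈ C.Qstates) :
    ∃ w, w.Ground ∧ Reaches C.Γ0 w q := by
  obtain ⟨s₀, hs₀⟩ := C.hground
  rcases hq with hQA | ⟨_, ⟨w, hw, rfl⟩ | rfl, rfl⟩
  · obtain ⟨w, hw, hrun⟩ := C.hacc q hQA
    exact ⟨w, hw, hrun.mono C.A_subset_Γ0⟩
  · have hg : (w.subst fun _ => s₀).Ground := Ground.subst fun _ _ => hs₀
    exact ⟨_, hg, (reachesT_subst_stPattern C.BMatch_subset_Γ0 C.BProp_subset_Γ0 rfl hw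
      _).reaches hg⟩
  · exact ⟨s₀, hs₀, reaches_enc_var_zero C.BProp_subset_Γ0 hs₀⟩

/-- Shared states accept the same terms in `𝒜_T` and in `ℬ(ℛ)`, so a run of the union can be
replaced by a run of either automaton. -/
lemma reaches_of_reaches_Γ0 {t : Term G arG} {q : Q} (h : Reaches C.Γ0 t q) :
    (q ∈ C.QA → Reaches C.A.trans t q) ∧
      (q ∈ C.enc '' BStateSet Rg → Reaches (BTrans Rg C.enc) t q) := by
  induction h with
  | @app f ts qs q _ hrule ih =>
      rcases hrule with hA | hB
      · have hrunA := Reaches.app (fun i => (ih i).1 ((C.hAstates _ hA).2 i)) hA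
        exact ⟨fun _ => hrunA, fun hq => (C.hshared q ⟨(C.hAstates _ hA).1, hq⟩ _).mp hrunA⟩
      · have hrunB := Reaches.app (fun i => (ih i).2 ((states_mem_of_mem_BTrans hB).2 i)) hB
        exact ⟨fun hq => (C.hshared q ⟨hq, (states_mem_of_mem_BTrans hB).1⟩ _).mpr hrunB,
          fun _ => hrunB⟩

/-- Growingness makes each variable shared by `l` and `r` an argument of `l`, so its state
`θ n` is read off a child; the other variables of `r` get any ground term reaching `θ n`. -/
lemma exists_subst_of_reaches_satArg (hll : Rg.LeftLinear) (hgrow : Rg.Growing) {f : G}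
    {ls : Fin (arG f) → Term G arG} {r : Term G arG} (hrule : (app f ls, r) ∈ Rg.rules)
    {θ : ℕ → Q} (hθ : ∀ n ∈ r.vars, θ n ∈ C.Qstates) {ts : Fin (arG f) → Term G arG}
    (hts : ∀ i, (ts i).Ground) (hrun : ∀ i, Reaches C.Γ0 (ts i) (satArg C.enc θ r.vars (ls i))) :
    ∃ σ, app f ts = (app f ls).subst σ ∧
      ∀ n ∈ r.vars, (σ n).Ground ∧ Reaches C.Γ0 (σ n) (θ n) := by
  classical
  have hinst : ∀ i, ∃ τ, ts i = (ls i).subst τ := by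
    intro i
    have hrun := hrun i
    cases hls : ls i with
    | var m => exact ⟨fun _ => ts i, rfl⟩
    | app g ss =>
        rw [hls] at hrun
        have hSR : app g ss ∈ SR Rg := hls ▸ lhs_arg_mem_SR hrule i
        exact exists_subst_of_reaches_stPattern hll C.henc
          (fun ρ hρ => mem_BMatch_of_mem_BTrans C.henc hρ) hSR
          ((C.reaches_of_reaches_Γ0 hrun).2 ⟨_, stPattern_mem_BStateSet hSR, rfl⟩)
  obtain ⟨σ, hσ⟩ := (hll _ hrule).exists_subst hinst
  choose W hWg hW using fun q (hq : q ∈ C.Qstates) => C.exists_ground_reaches hq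
  refine ⟨fun n => if n ∈ (app f ls).vars then σ n
    else if hq : θ n ∈ C.Qstates then W _ hq else σ n, ?_, fun n hn => ?_⟩
  · rw [hσ]
    exact subst_congr fun n hn => by simp only [if_pos hn]
  by_cases hnl : n ∈ (app f ls).vars
  · obtain ⟨i, hi⟩ := mem_vars_app.mp hnl
    have hvar : ls i = var n := hgrow _ hrule n hnl hn f ls rfl i hi
    have hσn : σ n = ts i := by
      simp only [subst, app.injEq, heq_eq_eq, true_and] at hσ
      simpa [hvar, subst] using (congrFun hσ i).symm
    have hrun := hrun i
    simp only [hvar, satArg, if_pos hn] at hrun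
    simp only [if_pos hnl, hσn]
    exact ⟨hts i, hrun⟩
  · simp only [if_neg hnl, dif_pos (hθ n hn)]
    exact ⟨hWg _ _, hW _ _⟩

lemma sound_satStep (hll : Rg.LeftLinear) (hgrow : Rg.Growing) {Γ : Set (TARule G arG Q)}
    (hΓ0 : C.Γ0 ⊆ Γ)
    (hΓ : ∀ t q, t.Ground → Reaches Γ t q →
      ∃ t', t'.Ground ∧ RewritesStar Rg.rules t t' ∧ Reaches C.Γ0 t' q)
    {t : Term G arG} {q : Q} (hg : t.Ground) (h : Reaches (satStep Rg C.enc C.Qstates Γ) t q) :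
    ∃ t', t'.Ground ∧ RewritesStar Rg.rules t t' ∧ Reaches C.Γ0 t' q := by
  induction h with
  | @app g ts qs q _ hrule ih =>
      choose us hug hus hrun using fun i => ih i (ground_app_iff.mp hg i)
      rcases hrule with hold | ⟨f, ls, r, θ, q', hlr, hθ, hr, heq⟩
      · obtain ⟨t', hg', hstar, hrun'⟩ := hΓ (app g us) q (ground_app_iff.mpr hug)
          (Reaches.app (fun i => (hrun i).mono hΓ0) hold)
        exact ⟨t', hg', (rewritesStar_app hus).trans hstar, hrun'⟩
      · obtain rfl : g = f := congrArg Sigma.fst heq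
        obtain ⟨rfl, rfl⟩ := TARule.mk_inj heq
        obtain ⟨σ, hσ, hσr⟩ := C.exists_subst_of_reaches_satArg hll hgrow hlr hθ hug hrun
        have hstep : Rewrites Rg.rules (app g us) (r.subst σ) :=
          ⟨[], _, r, σ, hlr, by rw [subtermAt_nil, hσ], replaceAt_nil _ _⟩
        obtain ⟨t', hg', hstar, hrun'⟩ := hΓ (r.subst σ) q (Ground.subst fun n hn => (hσr n hn).1)
          (hr.reaches_subst fun n hn => (hσr n hn).2.mono hΓ0)
        exact ⟨t', hg', ((rewritesStar_app hus).tail hstep).trans hstar, hrun'⟩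

lemma sound_iterate_satStep (hll : Rg.LeftLinear) (hgrow : Rg.Growing) (n : ℕ)
    {t : Term G arG} {q : Q} (hg : t.Ground)
    (h : Reaches ((satStep Rg C.enc C.Qstates)^[n] C.Γ0) t q) :
    ∃ t', t'.Ground ∧ RewritesStar Rg.rules t t' ∧ Reaches C.Γ0 t' q := by
  induction n generalizing t q with
  | zero => exact ⟨t, hg, .refl, h⟩
  | succ n ih =>
      rw [Function.iterate_succ_apply'] at h
      exact C.sound_satStep hll hgrow (monotone_iterate_satStep (Nat.zero_le n))
        (fun _ _ => ih) hg h

lemma exists_rewritesStar_of_reaches_Γsat (hll : Rg.LeftLinear) (hgrow : Rg.Growing)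
    {t : Term G arG} {q : Q} (hg : t.Ground) (h : Reaches C.Γsat t q) :
    ∃ t', t'.Ground ∧ RewritesStar Rg.rules t t' ∧ Reaches C.Γ0 t' q := by
  obtain ⟨n, hn⟩ := (h.reachesT fun _ => C.enc (var 0)).exists_of_iUnion
    monotone_iterate_satStep
  exact C.sound_iterate_satStep hll hgrow n hg (hn.reaches hg)

lemma reachesT_subst_lhs (hrl : Rg.RightLinear) {l r : Term G arG} (hrule : (l, r) ∈ Rg.rules)
    (σ : ℕ → Term G arG) {q : Q} (h : ReachesT C.Γsat (fun _ => C.enc (var 0)) (r.subst σ) q) :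
    ReachesT C.Γsat (fun _ => C.enc (var 0)) (l.subst σ) q := by
  obtain ⟨θ, hr, hσ⟩ := h.exists_of_subst (hrl _ hrule)
  have hθ : ∀ n ∈ r.vars, θ n ∈ C.Qstates := fun n hn =>
    (hσ n hn).mem_of_forall_mem (fun ρ hρ => (C.states_mem_Qstates_of_mem_Γsat hρ).1)
      fun _ _ => C.enc_var_zero_mem_Qstates
  cases l with
  | var m => exact absurd rfl (Rg.lhs_not_var _ hrule m)
  | app f ls =>
      refine ReachesT.app (fun i => ?_) (mem_satGamma_of_reachesT hrule hθ hr)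
      cases hls : ls i with
      | var m =>
          by_cases hm : m ∈ r.vars
          · simpa [satArg, subst, hm] using hσ m hm
          · simpa [satArg, subst, hm] using
              reachesT_enc_var_zero (C.BProp_subset_Γ0.trans C.Γ0_subset_Γsat) (σ m)
      | app g ss =>
          exact reachesT_subst_stPattern (C.BMatch_subset_Γ0.trans C.Γ0_subset_Γsat)
            (C.BProp_subset_Γ0.trans C.Γ0_subset_Γsat) rfl (hls ▸ lhs_arg_mem_SR hrule i) σ

lemma reachesT_of_rewritesStar (hrl : Rg.RightLinear) {t t' : Term G arG}
    (h : RewritesStar Rg.rules t t') {q : Q}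
    (h' : ReachesT C.Γsat (fun _ => C.enc (var 0)) t' q) :
    ReachesT C.Γsat (fun _ => C.enc (var 0)) t q := by
  induction h with
  | refl => exact h'
  | tail _ hstep ih =>
      obtain ⟨p, l, r, σ, hlr, hsub, hrep⟩ := hstep
      exact ih (ReachesT.of_replaceAt hsub hrep (fun _ => C.reachesT_subst_lhs hrl hlr σ) h')

end CSetup

namespace CpSetup

variable {G : Type} [Fintype G] {arG : G → ℕ} {Q : Type} [Fintype Q]
  {Rg : TRS G arG} {T : Set (Term G arG)} (C : CpSetup Q Rg T)

lemma Γsat_subset_Γ' : C.Γsat ⊆ C.Γ' := fun _ h => Or.inl (Or.inl (Or.inl h))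

lemma BMatch_enc2_subset_Γ' : BMatch Rg C.enc2 ⊆ C.Γ' := fun _ h => Or.inl (Or.inl (Or.inr h))

lemma RedexRules_subset_Γ' : RedexRules Rg C.enc2 C.qr ⊆ C.Γ' := fun _ h => Or.inl (Or.inr h)

lemma QrProp_subset_Γ' : QrProp C.enc C.qr ⊆ C.Γ' := Set.subset_union_right

lemma BProp_subset_Γ' : BProp C.enc ⊆ C.Γ' :=
  (C.BProp_subset_Γ0.trans C.Γ0_subset_Γsat).trans C.Γsat_subset_Γ'

lemma not_mem_Qstates {q : Q} (hq : q ∈ C.enc2 '' (BStateSet Rg \ {var 0}) ∪ {C.qr}) :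
    q ∉ C.Qstates :=
  fun h => Set.eq_empty_iff_forall_notMem.mp C.hfresh q ⟨hq, h⟩

lemma qr_not_mem_Qstates : C.qr ∉ C.Qstates := C.not_mem_Qstates (Or.inr rfl)

lemma mem_Γsat_or_target_fresh {ρ : TARule G arG Q} (h : ρ ∈ C.Γ') :
    ρ ∈ C.Γsat ∨ ρ.2.2 ∈ C.enc2 '' (BStateSet Rg \ {var 0}) ∪ {C.qr} := by
  rcases h with ((h | ⟨f, ts, hSR, rfl⟩) | ⟨f, ls, r, -, rfl⟩) | ⟨f, j, rfl⟩
  · exact Or.inl h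
  · exact Or.inr (Or.inl ⟨_, ⟨stPattern_mem_BStateSet hSR, by simp [stPattern]⟩, rfl⟩)
  · exact Or.inr (Or.inr rfl)
  · exact Or.inr (Or.inr rfl)

lemma reaches_Γsat_of_reaches_Γ' {t : Term G arG} {q : Q} (h : Reaches C.Γ' t q)
    (hq : q ∈ C.Qstates) : Reaches C.Γsat t q := by
  induction h with
  | @app f ts qs q _ hrule ih =>
      rcases C.mem_Γsat_or_target_fresh hrule with hsat | hfresh
      · exact Reaches.app (fun i => ih i ((C.states_mem_Qstates_of_mem_Γsat hsat).2 i)) hsat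
      · exact absurd hq (C.not_mem_Qstates hfresh)

lemma mem_BMatch_of_mem_Γ' {ρ : TARule G arG Q} (h : ρ ∈ C.Γ')
    (hρ : ρ.2.2 ∈ C.enc2 '' (BStateSet Rg \ {var 0})) : ρ ∈ BMatch Rg C.enc2 := by
  rcases h with ((hsat | h) | ⟨f, ls, r, -, rfl⟩) | ⟨f, j, rfl⟩
  · exact absurd (C.states_mem_Qstates_of_mem_Γsat hsat).1 (C.not_mem_Qstates (Or.inl hρ))
  · exact h
  · exact absurd hρ C.hqr
  · exact absurd hρ C.hqr

lemma lhsMatch_of_isRedex {g : G} {ts : Fin (arG g) → Term G arG} (hg : ∀ i, (ts i).Ground)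
    (h : Rg.IsRedex (app g ts)) : LhsMatch Rg C.enc2 g fun i => dn C.Γ' (ts i) := by
  obtain ⟨⟨l, r⟩, hlr, σ, hσ⟩ := h
  cases l with
  | var m => exact absurd rfl (Rg.lhs_not_var _ hlr m)
  | app f ls =>
      simp only [subst, app.injEq] at hσ
      obtain ⟨rfl, hts⟩ := hσ
      cases eq_of_heq hts
      refine ⟨ls, r, hlr, fun i => ?_⟩
      exact (reachesT_subst_stPattern C.BMatch_enc2_subset_Γ' C.BProp_subset_Γ' C.hx
        (lhs_arg_mem_SR hlr i) σ).reaches (hg i)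

lemma isRedex_of_lhsMatch (hll : Rg.LeftLinear) {g : G} {ts : Fin (arG g) → Term G arG}
    (h : LhsMatch Rg C.enc2 g fun i => dn C.Γ' (ts i)) : Rg.IsRedex (app g ts) := by
  obtain ⟨ls, r, hlr, hmem⟩ := h
  obtain ⟨σ, hσ⟩ := (hll _ hlr).exists_subst fun i =>
    exists_subst_of_reaches_stPattern hll C.henc2 (fun _ => C.mem_BMatch_of_mem_Γ')
      (lhs_arg_mem_SR hlr i) (hmem i)
  exact ⟨_, hlr, σ, hσ⟩

lemma reaches_qr_of_lhsMatch {g : G} {ts : Fin (arG g) → Term G arG}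
    (h : LhsMatch Rg C.enc2 g fun i => dn C.Γ' (ts i)) : Reaches C.Γ' (app g ts) C.qr := by
  obtain ⟨ls, r, hlr, hmem⟩ := h
  exact Reaches.app hmem (C.RedexRules_subset_Γ' ⟨g, ls, r, hlr, rfl⟩)

lemma reducible_of_reaches_qr (hll : Rg.LeftLinear) {t : Term G arG} (hg : t.Ground)
    (h : Reaches C.Γ' t C.qr) : Rg.Reducible t := by
  induction t with
  | var n => exact absurd hg (not_ground_var n)
  | app g ts ih =>
      obtain ⟨qs, hts, hrule⟩ : ∃ qs, (∀ i, Reaches C.Γ' (ts i) (qs i)) ∧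
          (⟨g, qs, C.qr⟩ : TARule G arG Q) ∈ C.Γ' := by
        cases h with | app hts hrule => exact ⟨_, hts, hrule⟩
      rcases hrule with ((hsat | ⟨f₁, ts₁, hSR, heq⟩) | ⟨f₁, ls, r, hlr, heq⟩) | ⟨f₁, j, heq⟩
      · exact absurd (C.states_mem_Qstates_of_mem_Γsat hsat).1 C.qr_not_mem_Qstates
      · exact absurd ⟨_, ⟨stPattern_mem_BStateSet hSR, by simp [stPattern]⟩,
          (congrArg (fun ρ => ρ.2.2) heq).symm⟩ C.hqr
      · obtain rfl : g = f₁ := congrArg Sigma.fst heq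
        obtain ⟨rfl, -⟩ := TARule.mk_inj heq
        exact ⟨[], (Rg.redexPos_nil_iff _).mpr (C.isRedex_of_lhsMatch hll ⟨ls, r, hlr, hts⟩)⟩
      · obtain rfl : g = f₁ := congrArg Sigma.fst heq
        obtain ⟨rfl, -⟩ := TARule.mk_inj heq
        obtain ⟨p, hp⟩ := ih j (ground_app_iff.mp hg j) (by simpa using hts j)
        exact ⟨(j : ℕ) :: p, (Rg.redexPos_app_cons_iff ts j p).mpr hp⟩

lemma reaches_qr_of_redexPos {t : Term G arG} (hg : t.Ground) {p : List ℕ}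
    (hp : Rg.RedexPos t p) : Reaches C.Γ' t C.qr := by
  induction p generalizing t with
  | nil =>
      cases t with
      | var n => exact absurd hg (not_ground_var n)
      | app g ts =>
          exact C.reaches_qr_of_lhsMatch (C.lhsMatch_of_isRedex (ground_app_iff.mp hg)
            ((Rg.redexPos_nil_iff _).mp hp))
  | cons i p ih =>
      cases t with
      | var n => exact absurd hp (Rg.not_redexPos_var_cons n i p)
      | app g ts =>
          obtain ⟨hi, hp⟩ := (Rg.redexPos_cons_iff ts i p).mp hp
          refine Reaches.app (fun j => ?_) (C.QrProp_subset_Γ' ⟨g, ⟨i, hi⟩, rfl⟩)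
          split_ifs with hj
          · exact hj ▸ ih (ground_app_iff.mp hg _) hp
          · exact reaches_enc_var_zero C.BProp_subset_Γ' (ground_app_iff.mp hg j)

lemma reaches_qr_iff (hll : Rg.LeftLinear) {t : Term G arG} (hg : t.Ground) :
    Reaches C.Γ' t C.qr ↔ Rg.Reducible t :=
  ⟨C.reducible_of_reaches_qr hll hg, fun ⟨_, hp⟩ => C.reaches_qr_of_redexPos hg hp⟩

end CpSetup

section Bullet

variable {F : Type} {ar : F → ℕ}

def debullet : Term (Option F) (arB ar) → Term (Option F) (arB ar)
  | var n => var n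
  | app none _ => var 0
  | app (some f) ts => app (some f) fun i => debullet (ts i)

lemma debullet_liftB (t : Term F ar) : debullet (liftB t) = liftB t := by
  induction t with
  | var n => rfl
  | app f ts ih =>
      simp only [liftB_app, debullet]
      congr 1
      funext i
      exact ih i

lemma debullet_subst_liftB (l : Term F ar) (σ : ℕ → Term (Option F) (arB ar)) :
    debullet ((liftB l).subst σ) = (liftB l).subst fun n => debullet (σ n) := by
  induction l with
  | var n => rfl
  | app f ls ih =>
      simp only [liftB_app, subst, debullet]
      congr 1
      funext i
      exact ih i

lemma subtermAt_debullet (t : Term (Option F) (arB ar)) (p : List ℕ) :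
    (debullet t).subtermAt p = (t.subtermAt p).map debullet := by
  induction p generalizing t with
  | nil => simp [subtermAt_nil]
  | cons i p ih =>
      match t with
      | var n => rfl
      | app none ts => simp [debullet, subtermAt, arB]
      | app (some f) ts =>
          show (if h : i < ar f then (debullet (ts ⟨i, h⟩)).subtermAt p else none) =
            Option.map debullet (if h : i < ar f then (ts ⟨i, h⟩).subtermAt p else none)
          split_ifs
          · exact ih _
          · rfl

lemma replaceAt_debullet (t : Term (Option F) (arB ar)) (p : List ℕ)
    (v : Term (Option F) (arB ar)) :
    (debullet t).replaceAt p (debullet v) = (t.replaceAt p v).map debullet := by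
  induction p generalizing t with
  | nil => simp [replaceAt_nil]
  | cons i p ih =>
      match t with
      | var n => rfl
      | app none ts => simp [debullet, replaceAt, arB]
      | app (some f) ts =>
          by_cases hi : i < ar f
          · obtain ⟨j, rfl⟩ : ∃ j : Fin (arB ar (some f)), (j : ℕ) = i := ⟨⟨i, hi⟩, rfl⟩
            simp only [debullet, replaceAt_app_cons, ih, Option.map_map]
            congr 1
            funext s
            simp only [Function.comp, debullet]
            congr 1
            funext k
            exact (Function.apply_update (fun _ => debullet) ts j s k).symm
          · simp [debullet, replaceAt, hi, arB]

lemma rewrites_debullet {R : TRS F ar} {t t' : Term (Option F) (arB ar)}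
    (h : Rewrites R.liftB.rules t t') : Rewrites R.liftB.rules (debullet t) (debullet t') := by
  obtain ⟨p, l, r, σ, hlr, hsub, hrep⟩ := h
  obtain ⟨l₀, r₀, -, heq⟩ := mem_liftB_rules.mp hlr
  obtain ⟨rfl, rfl⟩ := Prod.mk.inj heq
  refine ⟨p, _, _, fun n => debullet (σ n), hlr, ?_, ?_⟩
  · rw [subtermAt_debullet, hsub, Option.map_some, debullet_subst_liftB]
  · rw [← debullet_subst_liftB, replaceAt_debullet, hrep, Option.map_some]

lemma rewritesStar_debullet {R : TRS F ar} {t t' : Term (Option F) (arB ar)}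
    (h : RewritesStar R.liftB.rules t t') :
    RewritesStar R.liftB.rules (debullet t) (debullet t') :=
  Relation.ReflTransGen.lift debullet (fun _ _ => rewrites_debullet) _ _ h

lemma reachesT_of_reachesT_debullet {Q : Type} {Δ : Set (TARule (Option F) (arB ar) Q)}
    {enc : Term (Option F) (arB ar) → Q} (hB : BProp enc ⊆ Δ) {t : Term (Option F) (arB ar)}
    {q : Q} (h : ReachesT Δ (fun _ => enc (var 0)) (debullet t) q) :
    ReachesT Δ (fun _ => enc (var 0)) t q := by
  induction t generalizing q with
  | var n => exact h
  | app g ts ih =>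
      cases g with
      | none =>
          obtain rfl := reachesT_var_iff.mp h
          exact ReachesT.app (fun i => i.elim0) (hB ⟨none, rfl⟩)
      | some f =>
          obtain ⟨qs, hts, hrule⟩ := reachesT_app_iff.mp h
          exact ReachesT.app (fun i => ih i (hts i)) hrule

lemma app_none_eq_bulletTm (ts : Fin (arB ar none) → Term (Option F) (arB ar)) :
    app none ts = bulletTm :=
  congrArg _ (funext fun i => i.elim0)

lemma exists_liftB_eq_of_mem_NFset {R : TRS F ar} {t : Term (Option F) (arB ar)}
    (h : t ∈ TRS.NFset R.bullet) : ∃ s, t = liftB s := by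
  obtain ⟨hg, hnf⟩ := h
  induction t with
  | var n => exact absurd hg (not_ground_var n)
  | app g ts ih =>
      cases g with
      | none =>
          refine absurd ⟨[], (R.bullet.redexPos_nil_iff _).mpr ⟨_, Or.inr rfl, fun _ => bulletTm, ?_⟩⟩ hnf
          rw [app_none_eq_bulletTm]
          exact (app_none_eq_bulletTm _).symm
      | some f =>
          choose s hs using fun i => ih i (ground_app_iff.mp hg i) fun ⟨p, hp⟩ =>
            hnf ⟨(i : ℕ) :: p, (R.bullet.redexPos_app_cons_iff ts i p).mpr hp⟩
          exact ⟨app f s, congrArg _ (funext hs)⟩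

lemma replaceAt_liftB_var_zero (s : Term F ar) (p : List ℕ) :
    (liftB s).replaceAt p (var 0) = ((liftB s).replaceAt p bulletTm).map debullet := by
  rw [← replaceAt_debullet, debullet_liftB]
  rfl

lemma bulletTm_ground : (bulletTm : Term (Option F) (arB ar)).Ground :=
  ground_app_iff.mpr fun i => i.elim0

end Bullet

section Holes

variable {F : Type} {ar : F → ℕ} {Q : Type}

/-- `u[x]_p`, with the hole `x` read as the state `qx`, reaches `q`. The hole is a variable
rather than `•`, which may reach further states than `⟨x⟩`. -/
def HoleReaches (Γ : Set (TARule (Option F) (arB ar) Q)) (qx : Q) (u : Term F ar)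
    (p : List ℕ) (q : Q) : Prop :=
  ∃ w, (liftB u).replaceAt p (var 0) = some w ∧ ReachesT Γ (fun _ => qx) w q

def HoleStates (R : TRS F ar) (Γ : Set (TARule (Option F) (arB ar) Q)) (qx : Q)
    (u : Term F ar) : Set Q :=
  { q | ∃ p, R.RedexPos u p ∧ HoleReaches Γ qx u p q }

/-- The second component that `𝒟(ℛ)` assigns to the `i`-th argument of `g(us)` when it
assigns `P` to `g(us)`. -/
def ArgHoleStates (R : TRS F ar) (Γ : Set (TARule (Option F) (arB ar) Q)) (qx : Q) {g : F}
    (us : Fin (ar g) → Term F ar) (P : Set Q) (i : Fin (ar g)) : Set Q :=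
  { qi | qi ∈ HoleStates R Γ qx (us i) ∧ ∃ q ∈ P, ∃ qs : Fin (ar g) → Q,
      (⟨some g, qs, q⟩ : TARule (Option F) (arB ar) Q) ∈ Γ ∧ qs i = qi ∧
        ∀ j ≠ i, Reaches Γ (liftB (us j)) (qs j) }

variable {Γ : Set (TARule (Option F) (arB ar) Q)} {qx : Q} {R : TRS F ar}

lemma holeReaches_nil {u : Term F ar} {q : Q} : HoleReaches Γ qx u [] q ↔ q = qx := by
  simp [HoleReaches, replaceAt_nil, reachesT_var_iff]

lemma holeReaches_app_cons {g : F} {us : Fin (ar g) → Term F ar} (hg : ∀ j, (us j).Ground)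
    (i : Fin (ar g)) (p : List ℕ) (q : Q) :
    HoleReaches Γ qx (app g us) ((i : ℕ) :: p) q ↔
      ∃ qs : Fin (ar g) → Q, (⟨some g, qs, q⟩ : TARule (Option F) (arB ar) Q) ∈ Γ ∧
        HoleReaches Γ qx (us i) p (qs i) ∧ ∀ j ≠ i, Reaches Γ (liftB (us j)) (qs j) := by
  have hrep : (liftB (app g us)).replaceAt ((i : ℕ) :: p) (var 0) =
      ((liftB (us i)).replaceAt p (var 0)).map
        fun s => app (some g) (Function.update (fun j => liftB (us j)) i s) :=
    replaceAt_app_cons (ar := arB ar) (f := some g) (fun j => liftB (us j)) i p (var 0)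
  simp only [HoleReaches, hrep, Option.map_eq_some_iff]
  constructor
  · rintro ⟨_, ⟨w, hw, rfl⟩, hrun⟩
    obtain ⟨qs, hts, hrule⟩ := reachesT_app_iff.mp hrun
    refine ⟨qs, hrule, ⟨w, hw, ?_⟩, fun j hj => ?_⟩
    · have := hts i
      erw [Function.update_self] at this
      exact this
    · have := hts j
      erw [Function.update_of_ne hj] at this
      exact this.reaches (hg j).liftB
  · rintro ⟨qs, hrule, ⟨w, hw, hrun⟩, hsib⟩
    refine ⟨_, ⟨w, hw, rfl⟩, ReachesT.app (fun j => ?_) hrule⟩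
    rcases eq_or_ne j i with rfl | hj
    · simpa using hrun
    · simpa [Function.update_of_ne hj] using (hsib j hj).reachesT _

variable {g : F} {us : Fin (ar g) → Term F ar} {P : Set Q}

lemma exists_mem_argHoleStates (hgs : ∀ j, (us j).Ground)
    (hcov : ∀ p, R.RedexPos (app g us) p → ∃ q ∈ P, HoleReaches Γ qx (app g us) p q)
    (i : Fin (ar g)) (p : List ℕ) (hp : R.RedexPos (us i) p) :
    ∃ qi ∈ ArgHoleStates R Γ qx us P i, HoleReaches Γ qx (us i) p qi := by
  obtain ⟨q, hqP, hq⟩ := hcov _ ((R.redexPos_app_cons_iff us i p).mpr hp)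
  obtain ⟨qs, hrule, hhole, hsib⟩ := (holeReaches_app_cons hgs i p q).mp hq
  exact ⟨qs i, ⟨⟨p, hp, hhole⟩, q, hqP, qs, hrule, rfl, hsib⟩, hhole⟩

lemma mem_iUnion_oneStep_argHoleStates (hgs : ∀ j, (us j).Ground) {q : Q} (hqP : q ∈ P)
    {i : Fin (ar g)} {p : List ℕ} (hp : R.RedexPos (us i) p)
    (hq : HoleReaches Γ qx (app g us) ((i : ℕ) :: p) q) :
    q ∈ ⋃ i, oneStep Γ (some g)
      fun j => if j = i then ArgHoleStates R Γ qx us P j else dn Γ (liftB (us j)) := by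
  obtain ⟨qs, hrule, hhole, hsib⟩ := (holeReaches_app_cons hgs i p q).mp hq
  refine Set.mem_iUnion.mpr ⟨i, qs, fun j => ?_, hrule⟩
  beta_reduce
  split_ifs with hj
  · subst hj
    exact ⟨⟨p, hp, hhole⟩, q, hqP, qs, hrule, rfl, hsib⟩
  · exact hsib j hj

open Classical in
/-- `P` splits into the `P¹ ∪ P²` of a transition of `𝒟(ℛ)`. -/
lemma eq_union_of_subset_holeStates (hgs : ∀ j, (us j).Ground)
    (hP : P ⊆ HoleStates R Γ qx (app g us))
    (hcov : ∀ p, R.RedexPos (app g us) p → ∃ q ∈ P, HoleReaches Γ qx (app g us) p q) :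
    P = (P ∩ ⋃ i, oneStep Γ (some g) fun j =>
        if j = i then ArgHoleStates R Γ qx us P j else dn Γ (liftB (us j))) ∪
      if R.IsRedex (app g us) then {qx} else ∅ := by
  ext q
  constructor
  · intro hq
    obtain ⟨p, hp, hhole⟩ := hP hq
    rcases p with _ | ⟨a, p⟩
    · rw [holeReaches_nil.mp hhole]
      exact Or.inr (by simp [(R.redexPos_nil_iff _).mp hp])
    · obtain ⟨ha, hp⟩ := (R.redexPos_cons_iff us a p).mp hp
      exact Or.inl ⟨hq, mem_iUnion_oneStep_argHoleStates hgs hq hp hhole⟩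
  · rintro (⟨hq, -⟩ | hq)
    · exact hq
    · split_ifs at hq with hred
      · obtain ⟨q', hq'P, hq'⟩ := hcov [] ((R.redexPos_nil_iff _).mpr hred)
        rwa [Set.mem_singleton_iff.mp hq, ← holeReaches_nil.mp hq']
      · exact absurd hq (Set.notMem_empty q)

end Holes

section Descendants

variable {F : Type} [Fintype F] {ar : F → ℕ} {Q : Type} [Fintype Q] {R : TRS F ar}

/-- The saturation is sound for the growing TRS `ℛ`, and complete because `•`, which occurs in
no rule and in no normal form, behaves like the variable `x`. -/
lemma exists_final_holeReaches_iff (hlin : R.IsLinear) (hgrow : R.Growing)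
    (C : CpSetup Q R.liftB (TRS.NFset R.bullet)) {s : Term F ar} (hs : s.Ground) (p : List ℕ) :
    (∃ q ∈ C.A.final, HoleReaches C.Γ' (C.enc (var 0)) s p q) ↔
      ∃ u, (liftB s).replaceAt p bulletTm = some u ∧
        ∃ t ∈ TRS.NFset R.bullet, RewritesStar R.liftB.rules u t := by
  constructor
  · rintro ⟨q, hqf, w, hw, hrun⟩
    rw [replaceAt_liftB_var_zero, Option.map_eq_some_iff] at hw
    obtain ⟨u, hu, rfl⟩ := hw
    have hug : u.Ground := hs.liftB.replaceAt bulletTm_ground hu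
    have hrun' : Reaches C.Γsat u q := C.reaches_Γsat_of_reaches_Γ'
      ((reachesT_of_reachesT_debullet C.BProp_subset_Γ' hrun).reaches hug) (Or.inl (C.hfinal hqf))
    obtain ⟨t, htg, hstar, hrunt⟩ :=
      C.exists_rewritesStar_of_reaches_Γsat hlin.1.liftB hgrow.liftB hug hrun'
    refine ⟨u, hu, t, ?_, hstar⟩
    rw [C.hT]
    exact ⟨htg, q, hqf, (C.reaches_of_reaches_Γ0 hrunt).1 (C.hfinal hqf)⟩
  · rintro ⟨u, hu, t, ht, hstar⟩
    obtain ⟨s₀, rfl⟩ := exists_liftB_eq_of_mem_NFset ht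
    obtain ⟨-, q, hqf, hrunA⟩ : liftB s₀ ∈ Lang C.A := C.hT ▸ ht
    have hstar' := rewritesStar_debullet hstar
    rw [debullet_liftB] at hstar'
    refine ⟨q, hqf, debullet u, by rw [replaceAt_liftB_var_zero, hu]; rfl, ?_⟩
    exact (C.reachesT_of_rewritesStar hlin.2.liftB hstar'
      ((hrunA.mono (C.A_subset_Γ0.trans C.Γ0_subset_Γsat)).reachesT _)).mono C.Γsat_subset_Γ'

end Descendants

section DAutomaton

variable {F : Type} [Fintype F] {ar : F → ℕ} {Q : Type} [Fintype Q] {R : TRS F ar}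
  {T : Set (Term (Option F) (arB ar))} (C : CpSetup Q R.liftB T)

lemma CpSetup.lhsMatch_liftB_iff (hll : R.LeftLinear) {g : F} {us : Fin (ar g) → Term F ar}
    (hg : ∀ i, (us i).Ground) :
    LhsMatch R.liftB C.enc2 (some g) (fun i => dn C.Γ' (liftB (us i))) ↔ R.IsRedex (app g us) :=
  ⟨fun h => isRedex_liftB_iff.mp (C.isRedex_of_lhsMatch hll.liftB h),
    fun h => C.lhsMatch_of_isRedex (fun i => (hg i).liftB) (isRedex_liftB_iff.mpr h)⟩

lemma CpSetup.reaches_DTrans (hll : R.LeftLinear) {u : Term F ar} {SP : Set Q × Set Q}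
    (h : Reaches (DTrans R.liftB C.Γ' C.enc C.enc2) u SP) (hu : u.Ground) :
    SP.1 = dn C.Γ' (liftB u) ∧
      ∀ p, R.RedexPos u p → ∃ q ∈ SP.2, HoleReaches C.Γ' (C.enc (var 0)) u p q := by
  induction h with
  | @app g us SPs SP _ hrule ih =>
      have hgs := ground_app_iff.mp hu
      obtain ⟨f, SPc, P1, P2, -, hcov, hP2, heq⟩ := hrule
      obtain rfl : g = f := congrArg Sigma.fst heq
      obtain ⟨rfl, rfl⟩ := TARule.mk_inj heq
      have ihs := fun i => ih i (hgs i)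
      have hS : (fun i => (SPs i).1) = fun i => dn C.Γ' (liftB (us i)) :=
        funext fun i => (ihs i).1
      refine ⟨(congrArg (oneStep C.Γ' (some g)) hS).trans (dn_app (some g) _).symm,
        fun p hp => ?_⟩
      rcases p with _ | ⟨a, p⟩
      · have hLM : LhsMatch R.liftB C.enc2 (some g) fun i => (SPs i).1 :=
          hS ▸ (C.lhsMatch_liftB_iff hll hgs).mpr ((R.redexPos_nil_iff _).mp hp)
        rcases hP2 with ⟨-, rfl⟩ | ⟨hn, -⟩
        · exact ⟨_, Or.inr rfl, holeReaches_nil.mpr rfl⟩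
        · exact absurd hLM hn
      · obtain ⟨ha, hp⟩ := (R.redexPos_cons_iff us a p).mp hp
        obtain ⟨qi, hqi, hhole⟩ := (ihs ⟨a, ha⟩).2 p hp
        obtain ⟨q, hqP1, qs, hqs, hrule⟩ := hcov ⟨a, ha⟩ qi hqi
        refine ⟨q, Or.inl hqP1, (holeReaches_app_cons hgs ⟨a, ha⟩ p q).mpr
          ⟨qs, hrule, ?_, fun j hj => ?_⟩⟩
        · have := hqs ⟨a, ha⟩
          beta_reduce at this
          split_ifs at this with hc
          · exact (Set.mem_singleton_iff.mp this) ▸ hhole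
          · exact absurd rfl hc
        · have := hqs j
          beta_reduce at this
          split_ifs at this with hc
          · exact absurd hc hj
          · rwa [(ihs j).1] at this

lemma CpSetup.mem_DTrans (hll : R.LeftLinear) {g : F} {us : Fin (ar g) → Term F ar}
    (hgs : ∀ j, (us j).Ground) {P : Set Q}
    (hP : P ⊆ HoleStates R C.Γ' (C.enc (var 0)) (app g us))
    (hcov : ∀ p, R.RedexPos (app g us) p →
      ∃ q ∈ P, HoleReaches C.Γ' (C.enc (var 0)) (app g us) p q) :
    (⟨g, fun i => (dn C.Γ' (liftB (us i)), ArgHoleStates R C.Γ' (C.enc (var 0)) us P i),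
      (dn C.Γ' (liftB (app g us)), P)⟩ : TARule F ar (Set Q × Set Q)) ∈
      DTrans R.liftB C.Γ' C.enc C.enc2 := by
  classical
  refine ⟨g, fun i => (dn C.Γ' (liftB (us i)), ArgHoleStates R C.Γ' (C.enc (var 0)) us P i),
    P ∩ ⋃ i, oneStep C.Γ' (some g) (fun j => if j = i
      then ArgHoleStates R C.Γ' (C.enc (var 0)) us P j else dn C.Γ' (liftB (us j))),
    if R.IsRedex (app g us) then {C.enc (var 0)} else ∅, Set.inter_subset_right, ?_, ?_, ?_⟩
  · rintro i qi ⟨hqi, q, hqP, qs, hrule, rfl, hsib⟩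
    refine ⟨q, ⟨hqP, Set.mem_iUnion.mpr ⟨i, qs, fun j => ?_, hrule⟩⟩, qs, fun j => ?_, hrule⟩
    · beta_reduce
      split_ifs with hj
      · subst hj
        exact ⟨hqi, q, hqP, qs, hrule, rfl, hsib⟩
      · exact hsib j hj
    · beta_reduce
      split_ifs with hj
      · subst hj
        rfl
      · exact hsib j hj
  · by_cases hred : R.IsRedex (app g us)
    · exact Or.inl ⟨(C.lhsMatch_liftB_iff hll hgs).mpr hred, if_pos hred⟩
    · exact Or.inr ⟨fun h => hred ((C.lhsMatch_liftB_iff hll hgs).mp h), if_neg hred⟩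
  · rw [← eq_union_of_subset_holeStates hgs hP hcov, liftB_app, dn_app]

lemma CpSetup.reaches_DTrans_of_subset_holeStates (hll : R.LeftLinear) {u : Term F ar}
    (hu : u.Ground) {P : Set Q}
    (hP : P ⊆ HoleStates R C.Γ' (C.enc (var 0)) u)
    (hcov : ∀ p, R.RedexPos u p → ∃ q ∈ P, HoleReaches C.Γ' (C.enc (var 0)) u p q) :
    Reaches (DTrans R.liftB C.Γ' C.enc C.enc2) u (dn C.Γ' (liftB u), P) := by
  induction u generalizing P with
  | var n => exact absurd hu (not_ground_var n)
  | app g us ih =>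
      have hgs := ground_app_iff.mp hu
      exact Reaches.app (fun i => ih i (hgs i) (fun _ h => h.1)
        (exists_mem_argHoleStates hgs hcov i)) (C.mem_DTrans hll hgs hP hcov)

end DAutomaton

/-- Let `ℛ` be a linear growing TRS over `𝓕` and `𝒟(ℛ)` the
powerset-pair automaton built from `𝒞'_{NF_{ℛ•}}(ℛ)`.  For every `s ∈ 𝒯(𝓕)`:
`s ∈ L(𝒟(ℛ))` iff `s` is reducible with respect to `ℛ` and
`s[•]_p ∈ (→_ℛ*)[NF_{ℛ•}]` for every redex position `p` of `s`. -/
theorem statement11 {F : Type} [Fintype F] {ar : F → ℕ} {Q : Type} [Fintype Q]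
    (R : TRS F ar) (hlin : R.IsLinear) (hgrow : R.Growing)
    (C : CpSetup Q R.liftB (TRS.NFset R.bullet))
    (s : Term F ar) (hs : s.Ground) :
    s ∈ Lang (DAutomaton R.liftB C.Γ' C.enc C.enc2 C.qr C.A.final) ↔
      (R.Reducible s ∧ ∀ p, R.RedexPos s p →
        ∃ u, (liftB s).replaceAt p bulletTm = some u ∧
          ∃ t ∈ TRS.NFset R.bullet, RewritesStar R.liftB.rules u t) := by
  have hqr : Reaches C.Γ' (liftB s) C.qr ↔ R.Reducible s :=
    (C.reaches_qr_iff hlin.1.liftB hs.liftB).trans reducible_liftB_iff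
  constructor
  · rintro ⟨-, SP, ⟨hqrS, hPf⟩, hrun⟩
    obtain ⟨hS, hcov⟩ := C.reaches_DTrans hlin.1 hrun hs
    rw [hS] at hqrS
    refine ⟨hqr.mp hqrS, fun p hp => ?_⟩
    obtain ⟨q, hqP, hq⟩ := hcov p hp
    exact (exists_final_holeReaches_iff hlin hgrow C hs p).mp ⟨q, hPf hqP, hq⟩
  · rintro ⟨hred, hdesc⟩
    refine ⟨hs, (dn C.Γ' (liftB s), HoleStates R C.Γ' (C.enc (var 0)) s ∩ C.A.final),
      ⟨hqr.mpr hred, Set.inter_subset_right⟩,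
      C.reaches_DTrans_of_subset_holeStates hlin.1 hs Set.inter_subset_left fun p hp => ?_⟩
    obtain ⟨q, hqf, hq⟩ := (exists_final_holeReaches_iff hlin hgrow C hs p).mpr (hdesc p hp)
    exact ⟨q, ⟨⟨p, hp, hq⟩, hqf⟩, hq⟩
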